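/- arXiv:math/0406139 — 8 statements merged into one kernel-verified Lean document; each statement's English description precedes it below -/
import Mathlib

section
/- Let (H, ω) be a symplectic vector space and (λ, μ) an algebraic Fredholm pair of isotropic subspaces with index(λ, μ) ≥ 0. Then index(λ, μ) = 0 and (λ + μ)^ω = λ ∩ μ. -/
/-!
Isotropy puts `λ ∩ μ` inside `(λ + μ)^ω`, and nondegeneracy makes `y ↦ ω(·, y)` an antilinear
embedding of `(λ + μ)^ω` into the dual of `H / (λ + μ)`. Hence
`dim (λ ∩ μ) ≤ dim (λ + μ)^ω ≤ dim H / (λ + μ) ≤ dim (λ ∩ μ)`, the last step being the index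
hypothesis, so equality holds throughout and the inclusion `λ ∩ μ ⊆ (λ + μ)^ω` is an equality.
-/

open Module

section Semilinear

universe v v'

variable {K : Type*} {M : Type v} {M' : Type v'} [Field K] [AddCommGroup M] [Module K M]
  [AddCommGroup M'] [Module K M'] {σ : K →+* K} [RingHomSurjective σ]

theorem LinearMap.lift_rank_le_of_injectiveₛ (f : M →ₛₗ[σ] M') (hf : Function.Injective f) :
    Cardinal.lift.{v'} (Module.rank K M) ≤ Cardinal.lift.{v} (Module.rank K M') :=
  lift_rank_le_of_surjective_injective σ f.toAddMonoidHom σ.surjective hf (map_smulₛₗ f)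

theorem LinearMap.finiteDimensional_of_injectiveₛ [FiniteDimensional K M'] (f : M →ₛₗ[σ] M')
    (hf : Function.Injective f) : FiniteDimensional K M :=
  rank_lt_aleph0_iff.mp <| Cardinal.lift_lt_aleph0.mp <| (f.lift_rank_le_of_injectiveₛ hf).trans_lt
    (Cardinal.lift_lt_aleph0.mpr (rank_lt_aleph0_iff.mpr ‹_›))

theorem LinearMap.finrank_le_finrank_of_injectiveₛ [FiniteDimensional K M'] (f : M →ₛₗ[σ] M')
    (hf : Function.Injective f) : finrank K M ≤ finrank K M' :=
  finrank_le_finrank_of_rank_le_rank (f.lift_rank_le_of_injectiveₛ hf)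
    (rank_lt_aleph0_iff.mpr ‹_›)

end Semilinear

namespace Submodule

variable {R R₁ M M₁ : Type*} [CommSemiring R] [CommSemiring R₁] [AddCommMonoid M] [Module R M]
  [AddCommMonoid M₁] [Module R₁ M₁] {I₁ I₂ : R₁ →+* R} {B : M₁ →ₛₗ[I₁] M₁ →ₛₗ[I₂] M}

theorem orthogonalBilin_sup (S T : Submodule R₁ M₁) :
    (S ⊔ T).orthogonalBilin B = S.orthogonalBilin B ⊓ T.orthogonalBilin B := by
  refine le_antisymm (le_inf (orthogonalBilin_le (B := B) le_sup_left)
    (orthogonalBilin_le (B := B) le_sup_right)) ?_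
  rintro y ⟨hS, hT⟩ x hx
  obtain ⟨s, hs, t, ht, rfl⟩ := mem_sup.mp hx
  rw [map_add, LinearMap.add_apply, hS s hs, hT t ht, add_zero]

theorem inf_le_orthogonalBilin_sup {S T : Submodule R₁ M₁} (hS : S ≤ S.orthogonalBilin B)
    (hT : T ≤ T.orthogonalBilin B) : S ⊓ T ≤ (S ⊔ T).orthogonalBilin B :=
  (orthogonalBilin_sup (B := B) S T).symm ▸ inf_le_inf hS hT

end Submodule

section Field

variable {K V : Type*} [Field K] [AddCommGroup V] [Module K V] {σ : K →+* K}
  {B : V →ₗ[K] V →ₛₗ[σ] K}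

def LinearMap.orthogonalBilinToDualQuot (B : V →ₗ[K] V →ₛₗ[σ] K) (W : Submodule K V) :
    W.orthogonalBilin B →ₛₗ[σ] Dual K (V ⧸ W) :=
  W.dualQuotEquivDualAnnihilator.symm.toLinearMap.comp <|
    (B.flip.domRestrict _).codRestrict _ fun y ↦ (Submodule.mem_dualAnnihilator _).mpr y.2

theorem LinearMap.orthogonalBilinToDualQuot_injective (hB : B.SeparatingRight)
    (W : Submodule K V) : Function.Injective (B.orthogonalBilinToDualQuot W) := by
  rw [← LinearMap.ker_eq_bot, LinearMap.ker_eq_bot']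
  intro y hy
  have hflip : B.flip y = 0 := by
    simpa [LinearMap.orthogonalBilinToDualQuot, Subtype.ext_iff] using hy
  exact Subtype.ext <| hB y fun x ↦ LinearMap.congr_fun hflip x

variable [RingHomSurjective σ]

theorem Submodule.finiteDimensional_orthogonalBilin (hB : B.SeparatingRight)
    (W : Submodule K V) [FiniteDimensional K (V ⧸ W)] : FiniteDimensional K (W.orthogonalBilin B) :=
  (B.orthogonalBilinToDualQuot W).finiteDimensional_of_injectiveₛ
    (B.orthogonalBilinToDualQuot_injective hB W)

theorem Submodule.finrank_orthogonalBilin_le (hB : B.SeparatingRight)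
    (W : Submodule K V) [FiniteDimensional K (V ⧸ W)] :
    finrank K (W.orthogonalBilin B) ≤ finrank K (V ⧸ W) :=
  Subspace.dual_finrank_eq (K := K) (V := V ⧸ W) ▸
    (B.orthogonalBilinToDualQuot W).finrank_le_finrank_of_injectiveₛ
      (B.orthogonalBilinToDualQuot_injective hB W)

variable {L M : Submodule K V} [FiniteDimensional K (V ⧸ (L ⊔ M))]

theorem Submodule.inf_eq_orthogonalBilin_sup (hB : B.SeparatingRight)
    (hL : L ≤ L.orthogonalBilin B) (hM : M ≤ M.orthogonalBilin B)
    (hindex : finrank K (V ⧸ (L ⊔ M)) ≤ finrank K ↥(L ⊓ M)) :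
    L ⊓ M = (L ⊔ M).orthogonalBilin B :=
  have := finiteDimensional_orthogonalBilin hB (L ⊔ M)
  eq_of_le_of_finrank_le (inf_le_orthogonalBilin_sup hL hM)
    ((finrank_orthogonalBilin_le hB _).trans hindex)

theorem Submodule.finrank_inf_eq_finrank_quotient_sup (hB : B.SeparatingRight)
    (hL : L ≤ L.orthogonalBilin B) (hM : M ≤ M.orthogonalBilin B)
    (hindex : finrank K (V ⧸ (L ⊔ M)) ≤ finrank K ↥(L ⊓ M)) :
    finrank K ↥(L ⊓ M) = finrank K (V ⧸ (L ⊔ M)) :=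
  le_antisymm ((inf_eq_orthogonalBilin_sup hB hL hM hindex).symm ▸
    finrank_orthogonalBilin_le hB _) hindex

end Field

/-- Antilinearity in the second slot comes from skew-hermitian symmetry. -/
def skewHermitianForm {H : Type*} [AddCommGroup H] [Module ℂ H] (ω : H → H → ℂ)
    (hadd : ∀ x y z : H, ω (x + y) z = ω x z + ω y z)
    (hsmul : ∀ (c : ℂ) (x y : H), ω (c • x) y = c * ω x y)
    (hskew : ∀ x y : H, ω x y = -(starRingEnd ℂ) (ω y x)) : H →ₗ[ℂ] H →ₗ⋆[ℂ] ℂ :=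
  LinearMap.mk₂'ₛₗ _ _ ω hadd hsmul
    (fun x y z ↦ by rw [hskew x, hadd, map_add, neg_add, ← hskew, ← hskew])
    (fun c x y ↦ by rw [hskew x, hsmul, map_mul, smul_eq_mul, ← mul_neg, ← hskew])

theorem isotropic_fredholm_pair_index_zero_general
    {H : Type*} [AddCommGroup H] [Module ℂ H]
    (ω : H → H → ℂ)
    (hadd : ∀ x y z : H, ω (x + y) z = ω x z + ω y z)
    (hsmul : ∀ (c : ℂ) (x y : H), ω (c • x) y = c * ω x y)
    (hskew : ∀ x y : H, ω x y = -(starRingEnd ℂ) (ω y x))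
    (hnondeg : ∀ x : H, (∀ y : H, ω x y = 0) → x = 0)
    (lam mu : Submodule ℂ H)
    (hlam_iso : ∀ x ∈ lam, ∀ y ∈ lam, ω x y = 0)
    (hmu_iso : ∀ x ∈ mu, ∀ y ∈ mu, ω x y = 0)
    [FiniteDimensional ℂ (H ⧸ (lam ⊔ mu))]
    (hindex : (Module.finrank ℂ (H ⧸ (lam ⊔ mu)) : ℤ) ≤
      (Module.finrank ℂ ↥(lam ⊓ mu) : ℤ)) :
    Module.finrank ℂ ↥(lam ⊓ mu) = Module.finrank ℂ (H ⧸ (lam ⊔ mu)) ∧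
    {y : H | ∀ x ∈ lam ⊔ mu, ω x y = 0} = ((lam ⊓ mu : Submodule ℂ H) : Set H) := by
  set B := skewHermitianForm ω hadd hsmul hskew
  have hB : B.SeparatingRight := fun y hy ↦
    hnondeg y fun x ↦ by rw [hskew, show ω x y = 0 from hy x, map_zero, neg_zero]
  have hlam : lam ≤ lam.orthogonalBilin B := fun y hy x hx ↦ hlam_iso x hx y hy
  have hmu : mu ≤ mu.orthogonalBilin B := fun y hy x hx ↦ hmu_iso x hx y hy
  have hindex : finrank ℂ (H ⧸ (lam ⊔ mu)) ≤ finrank ℂ ↥(lam ⊓ mu) := mod_cast hindex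
  refine ⟨Submodule.finrank_inf_eq_finrank_quotient_sup hB hlam hmu hindex, ?_⟩
  rw [Submodule.inf_eq_orthogonalBilin_sup hB hlam hmu hindex]
  rfl

/-- For an algebraic Fredholm pair `(λ, μ)` of isotropic subspaces of a complex
symplectic vector space with `index(λ,μ) ≥ 0`, the index vanishes and
`(λ + μ)^ω = λ ∩ μ`. -/
theorem isotropic_fredholm_pair_index_zero
    {H : Type*} [AddCommGroup H] [Module ℂ H]
    (ω : H → H → ℂ)
    (hadd : ∀ x y z : H, ω (x + y) z = ω x z + ω y z)
    (hsmul : ∀ (c : ℂ) (x y : H), ω (c • x) y = c * ω x y)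
    (hskew : ∀ x y : H, ω x y = -(starRingEnd ℂ) (ω y x))
    (hnondeg : ∀ x : H, (∀ y : H, ω x y = 0) → x = 0)
    (lam mu : Submodule ℂ H)
    (hlam_iso : ∀ x ∈ lam, ∀ y ∈ lam, ω x y = 0)
    (hmu_iso : ∀ x ∈ mu, ∀ y ∈ mu, ω x y = 0)
    [FiniteDimensional ℂ ↥(lam ⊓ mu)]
    [FiniteDimensional ℂ (H ⧸ (lam ⊔ mu))]
    (hindex : (Module.finrank ℂ (H ⧸ (lam ⊔ mu)) : ℤ) ≤
      (Module.finrank ℂ ↥(lam ⊓ mu) : ℤ)) :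
    Module.finrank ℂ ↥(lam ⊓ mu) = Module.finrank ℂ (H ⧸ (lam ⊔ mu)) ∧
    {y : H | ∀ x ∈ lam ⊔ mu, ω x y = 0} = ((lam ⊓ mu : Submodule ℂ H) : Set H) :=
  isotropic_fredholm_pair_index_zero_general ω hadd hsmul hskew hnondeg lam mu hlam_iso hmu_iso
    hindex
end

section
/- Let (H, ω) be a symplectic vector space, (λ, μ) an algebraic Fredholm pair of isotropic subspaces with index(λ, μ) ≥ 0, and suppose additionally that (λ + μ)^{ωω} = λ + μ. Then λ and μ are Lagrangian subspaces of H. -/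
section Aux

variable {H : Type*} [AddCommGroup H] [Module ℂ H]

lemma omega_zero_left (ω : H → H → ℂ)
    (hsmul : ∀ (c : ℂ) (x y : H), ω (c • x) y = c * ω x y) (x : H) : ω 0 x = 0 := by
  have := hsmul 0 0 x; simpa using this

lemma omega_zero_right (ω : H → H → ℂ)
    (hsmul : ∀ (c : ℂ) (x y : H), ω (c • x) y = c * ω x y)
    (hskew : ∀ x y : H, ω x y = -(starRingEnd ℂ) (ω y x)) (x : H) : ω x 0 = 0 := by
  rw [hskew, omega_zero_left ω hsmul]; simp

lemma omega_add_right (ω : H → H → ℂ)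
    (hadd : ∀ x y z : H, ω (x + y) z = ω x z + ω y z)
    (hskew : ∀ x y : H, ω x y = -(starRingEnd ℂ) (ω y x)) (x y z : H) :
    ω x (y + z) = ω x y + ω x z := by
  rw [hskew, hadd, map_add, neg_add, ← hskew, ← hskew]

lemma omega_smul_right (ω : H → H → ℂ)
    (hsmul : ∀ (c : ℂ) (x y : H), ω (c • x) y = c * ω x y)
    (hskew : ∀ x y : H, ω x y = -(starRingEnd ℂ) (ω y x)) (c : ℂ) (x y : H) :
    ω x (c • y) = (starRingEnd ℂ) c * ω x y := by
  rw [hskew x (c • y), hsmul, map_mul, ← mul_neg, ← hskew]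

/-- The annihilator of a submodule with respect to `ω`. -/
def sympPerp (ω : H → H → ℂ)
    (hadd : ∀ x y z : H, ω (x + y) z = ω x z + ω y z)
    (hsmul : ∀ (c : ℂ) (x y : H), ω (c • x) y = c * ω x y)
    (hskew : ∀ x y : H, ω x y = -(starRingEnd ℂ) (ω y x))
    (S : Submodule ℂ H) : Submodule ℂ H where
  carrier := {y | ∀ x ∈ S, ω x y = 0}
  zero_mem' := fun x _ => omega_zero_right ω hsmul hskew x
  add_mem' := fun hy hz x hx => by
    rw [omega_add_right ω hadd hskew, hy x hx, hz x hx, add_zero]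
  smul_mem' := fun c y hy x hx => by
    rw [omega_smul_right ω hsmul hskew, hy x hx, mul_zero]

/-- `ω · y` as a `ℂ`-linear functional. -/
def omegaLeft (ω : H → H → ℂ)
    (hadd : ∀ x y z : H, ω (x + y) z = ω x z + ω y z)
    (hsmul : ∀ (c : ℂ) (x y : H), ω (c • x) y = c * ω x y)
    (y : H) : H →ₗ[ℂ] ℂ where
  toFun z := ω z y
  map_add' a b := hadd a b y
  map_smul' c a := by simpa using hsmul c a y

end Aux

/-- For an algebraic Fredholm pair `(λ, μ)` of isotropic subspaces of a complex
symplectic vector space with `index(λ,μ) ≥ 0` and `(λ+μ)^{ωω} = λ+μ`, both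
`λ` and `μ` are Lagrangian. -/
theorem isotropic_fredholm_pair_lagrangian
    {H : Type*} [AddCommGroup H] [Module ℂ H]
    (ω : H → H → ℂ)
    (hadd : ∀ x y z : H, ω (x + y) z = ω x z + ω y z)
    (hsmul : ∀ (c : ℂ) (x y : H), ω (c • x) y = c * ω x y)
    (hskew : ∀ x y : H, ω x y = -(starRingEnd ℂ) (ω y x))
    (hnondeg : ∀ x : H, (∀ y : H, ω x y = 0) → x = 0)
    (lam mu : Submodule ℂ H)
    (hlam_iso : ∀ x ∈ lam, ∀ y ∈ lam, ω x y = 0)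
    (hmu_iso : ∀ x ∈ mu, ∀ y ∈ mu, ω x y = 0)
    [FiniteDimensional ℂ ↥(lam ⊓ mu)]
    [FiniteDimensional ℂ (H ⧸ (lam ⊔ mu))]
    (hindex : (Module.finrank ℂ (H ⧸ (lam ⊔ mu)) : ℤ) ≤
      (Module.finrank ℂ ↥(lam ⊓ mu) : ℤ))
    (hdouble : {z : H | ∀ y ∈ {y : H | ∀ x ∈ lam ⊔ mu, ω x y = 0}, ω y z = 0}
      = ((lam ⊔ mu : Submodule ℂ H) : Set H)) :
    {y : H | ∀ x ∈ (lam : Set H), ω x y = 0} = (lam : Set H) ∧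
    {y : H | ∀ x ∈ (mu : Set H), ω x y = 0} = (mu : Set H) := by
  classical
  set ν : Submodule ℂ H := lam ⊔ mu with hν
  set P : Submodule ℂ H := sympPerp ω hadd hsmul hskew ν with hP
  have memP : ∀ y : H, y ∈ P ↔ ∀ x ∈ ν, ω x y = 0 := fun y => Iff.rfl
  -- the semilinear (hence ℝ-linear) injection of P into the dual of H ⧸ ν
  have hker : ∀ y : P, ν ≤ LinearMap.ker (omegaLeft ω hadd hsmul (y : H)) := by
    intro y x hx
    exact y.2 x hx
  let f : P →ₗ[ℝ] Module.Dual ℂ (H ⧸ ν) :=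
    { toFun := fun y => ν.liftQ (omegaLeft ω hadd hsmul (y : H)) (hker y)
      map_add' := by
        intro y z
        apply LinearMap.ext
        intro q
        obtain ⟨a, rfl⟩ := Submodule.Quotient.mk_surjective ν q
        simp [Submodule.liftQ_apply, omegaLeft,
          omega_add_right ω hadd hskew a (y : H) (z : H)]
      map_smul' := by
        intro r y
        apply LinearMap.ext
        intro q
        obtain ⟨a, rfl⟩ := Submodule.Quotient.mk_surjective ν q
        have h1 : ((r • y : P) : H) = (r : ℂ) • (y : H) := by
          simp [Submodule.coe_smul, ← Complex.coe_smul]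
        simp only [Submodule.liftQ_apply, omegaLeft, LinearMap.coe_mk, AddHom.coe_mk,
          RingHom.id_apply, LinearMap.smul_apply]
        rw [h1, omega_smul_right ω hsmul hskew]
        simp [Complex.real_smul] }
  have hinj : Function.Injective f := by
    rw [← LinearMap.ker_eq_bot]
    apply (Submodule.eq_bot_iff _).2
    intro y hy
    have h0 : ∀ z : H, ω z (y : H) = 0 := by
      intro z
      have := congrArg (fun g => g (Submodule.Quotient.mk z)) hy
      simpa [f, Submodule.liftQ_apply, omegaLeft] using this
    have : (y : H) = 0 := by
      apply hnondeg
      intro z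
      rw [hskew, h0 z]
      simp
    exact Subtype.ext this
  -- dimension bookkeeping
  haveI : FiniteDimensional ℂ (Module.Dual ℂ (H ⧸ ν)) := inferInstance
  haveI : FiniteDimensional ℝ (Module.Dual ℂ (H ⧸ ν)) :=
    Module.Finite.trans ℂ (Module.Dual ℂ (H ⧸ ν))
  haveI hPfinR : FiniteDimensional ℝ P := FiniteDimensional.of_injective f hinj
  haveI hPfin : FiniteDimensional ℂ P := Module.Finite.of_restrictScalars_finite ℝ ℂ P
  have hrank1 : Module.finrank ℝ P ≤ Module.finrank ℝ (Module.Dual ℂ (H ⧸ ν)) :=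
    LinearMap.finrank_le_finrank_of_injective hinj
  have htower1 : Module.finrank ℝ ℂ * Module.finrank ℂ P = Module.finrank ℝ P :=
    Module.finrank_mul_finrank ℝ ℂ P
  have htower2 : Module.finrank ℝ ℂ * Module.finrank ℂ (Module.Dual ℂ (H ⧸ ν))
      = Module.finrank ℝ (Module.Dual ℂ (H ⧸ ν)) :=
    Module.finrank_mul_finrank ℝ ℂ _
  have hdual : Module.finrank ℂ (Module.Dual ℂ (H ⧸ ν)) = Module.finrank ℂ (H ⧸ ν) :=
    Subspace.dual_finrank_eq
  have h2 : (0 : ℕ) < Module.finrank ℝ ℂ := by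
    rw [Complex.finrank_real_complex]; norm_num
  have hPle : Module.finrank ℂ P ≤ Module.finrank ℂ (H ⧸ ν) := by
    rw [← hdual]
    exact Nat.le_of_mul_le_mul_left (by rw [htower1, htower2]; exact hrank1) h2
  -- lam ⊓ mu ≤ P
  have hinfP : lam ⊓ mu ≤ P := by
    intro x hx
    rw [memP]
    intro z hz
    obtain ⟨a, ha, b, hb, rfl⟩ := Submodule.mem_sup.1 hz
    rw [hadd, hlam_iso a ha x hx.1, hmu_iso b hb x hx.2, add_zero]
  have hinfle : Module.finrank ℂ ↥(lam ⊓ mu) ≤ Module.finrank ℂ P := by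
    have : Function.Injective (Submodule.inclusion hinfP) := Submodule.inclusion_injective hinfP
    exact LinearMap.finrank_le_finrank_of_injective this
  have hidx : Module.finrank ℂ (H ⧸ ν) ≤ Module.finrank ℂ ↥(lam ⊓ mu) := by
    exact_mod_cast hindex
  -- equality of lam ⊓ mu and P
  have hPeq : lam ⊓ mu = P := by
    apply Submodule.eq_of_le_of_finrank_le hinfP
    exact le_trans hPle (le_trans hidx (le_refl _))
  -- P as a set is the inner set in hdouble
  have hPset : ({y : H | ∀ x ∈ lam ⊔ mu, ω x y = 0} : Set H) = (P : Set H) := rfl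
  -- main abstract step
  have key : ∀ (σ τ : Submodule ℂ H), σ ⊔ τ = ν →
      (∀ x ∈ σ, ∀ y ∈ σ, ω x y = 0) → (∀ x ∈ τ, ∀ y ∈ τ, ω x y = 0) →
      σ ⊓ τ = lam ⊓ mu →
      {y : H | ∀ x ∈ (σ : Set H), ω x y = 0} = (σ : Set H) := by
    intro σ τ hsup hσ hτ hinter
    apply Set.Subset.antisymm
    · intro w hw
      simp only [Set.mem_setOf_eq, SetLike.mem_coe] at hw ⊢
      -- w ∈ ν using hdouble
      have hwv : w ∈ ν := by
        have : w ∈ {z : H | ∀ y ∈ {y : H | ∀ x ∈ lam ⊔ mu, ω x y = 0}, ω y z = 0} := by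
          intro y hy
          rw [hPset] at hy
          have hyσ : y ∈ σ := by
            have : y ∈ lam ⊓ mu := hPeq ▸ hy
            rw [← hinter] at this
            exact this.1
          exact hw y hyσ
        rw [hdouble] at this
        exact this
      rw [← hsup] at hwv
      obtain ⟨a, ha, b, hb, hab⟩ := Submodule.mem_sup.1 hwv
      -- b = w - a annihilates σ
      have hbσperp : ∀ x ∈ σ, ω x b = 0 := by
        intro x hx
        have hb' : b = w + (-1 : ℂ) • a := by
          rw [← hab]; simp
        rw [hb', omega_add_right ω hadd hskew, omega_smul_right ω hsmul hskew,
          hw x hx, hσ x hx a ha]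
        simp
      -- b ∈ P
      have hbP : b ∈ P := by
        rw [memP, ← hsup]
        intro x hx
        obtain ⟨a', ha', b', hb', rfl⟩ := Submodule.mem_sup.1 hx
        rw [hadd, hbσperp a' ha', hτ b' hb' b hb, add_zero]
      have hbσ : b ∈ σ := by
        have : b ∈ lam ⊓ mu := hPeq ▸ hbP
        rw [← hinter] at this
        exact this.1
      rw [← hab]
      exact σ.add_mem ha hbσ
    · intro y hy x hx
      exact hσ x hx y hy
  constructor
  · exact key lam mu rfl hlam_iso hmu_iso rfl
  · exact key mu lam (by rw [sup_comm]) hmu_iso hlam_iso (by rw [inf_comm])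
end

section
/- Let H be a Banach space, (L, ω_L) a symplectic Banach space, i : H → L a continuous injective linear map with dense image, and ω_H the pulled-back symplectic form on H. If λ ⊆ H is a subspace such that the closure of i(λ) in L is a Lagrangian subspace of L and the closure of i(λ) intersected with i(H) equals i(λ), then λ is a Lagrangian subspace of (H, ω_H). In particular, if i(λ) itself is Lagrangian in L, then λ is Lagrangian in H. -/
/-- Lifting Lagrangian subspaces along an embedding: if `i : H → L` is a continuous
injective linear map with dense image, `λ ⊆ H` is a subspace such that the closure
of `i(λ)` is Lagrangian in `L` and `closure(i(λ)) ∩ i(H) = i(λ)`, then `λ` is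
Lagrangian in `(H, ω_H)` with the pulled-back form `ω_H(x,y) = ω_L(i x, i y)`. -/
theorem lagrangian_lifting
    {H L : Type*} [NormedAddCommGroup H] [NormedSpace ℂ H]
    [NormedAddCommGroup L] [NormedSpace ℂ L]
    (ωL : L → L → ℂ)
    (hadd : ∀ x y z : L, ωL (x + y) z = ωL x z + ωL y z)
    (hsmul : ∀ (c : ℂ) (x y : L), ωL (c • x) y = c * ωL x y)
    (hskew : ∀ x y : L, ωL x y = -(starRingEnd ℂ) (ωL y x))
    (C : ℝ) (hbound : ∀ x y : L, ‖ωL x y‖ ≤ C * ‖x‖ * ‖y‖)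
    (hnondeg : ∀ x : L, (∀ y : L, ωL x y = 0) → x = 0)
    (i : H →L[ℂ] L) (hinj : Function.Injective i) (hdense : DenseRange i)
    (lam : Submodule ℂ H)
    (hclos_lag : closure (i '' (lam : Set H))
      = {y : L | ∀ x ∈ closure (i '' (lam : Set H)), ωL x y = 0})
    (hclos_inter : closure (i '' (lam : Set H)) ∩ Set.range i = i '' (lam : Set H)) :
    (lam : Set H) = {y : H | ∀ x ∈ (lam : Set H), ωL (i x) (i y) = 0} := by
  ext y
  simp only [Set.mem_setOf_eq, SetLike.mem_coe]
  constructor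
  · intro hy x hx
    have hiy : i y ∈ closure (i '' (lam : Set H)) :=
      subset_closure ⟨y, hy, rfl⟩
    rw [hclos_lag] at hiy
    exact hiy (i x) (subset_closure ⟨x, hx, rfl⟩)
  · intro hy
    -- the map x ↦ ωL x (i y) is Lipschitz, hence continuous
    have hsub : ∀ a b : L, ωL (a - b) (i y) = ωL a (i y) - ωL b (i y) := by
      intro a b
      have h := hadd (a - b) b (i y)
      rw [sub_add_cancel] at h
      linear_combination -h
    have hcont : Continuous (fun x : L => ωL x (i y)) := by
      have hlip : LipschitzWith (Real.toNNReal (C * ‖i y‖))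
          (fun x : L => ωL x (i y)) := by
        apply LipschitzWith.of_dist_le_mul
        intro a b
        rw [dist_eq_norm, dist_eq_norm, ← hsub]
        calc ‖ωL (a - b) (i y)‖ ≤ C * ‖a - b‖ * ‖i y‖ := hbound _ _
          _ = (C * ‖i y‖) * ‖a - b‖ := by ring
          _ ≤ (Real.toNNReal (C * ‖i y‖) : ℝ) * ‖a - b‖ := by
              apply mul_le_mul_of_nonneg_right (Real.le_coe_toNNReal _) (norm_nonneg _)
      exact hlip.continuous
    have hclosed : IsClosed {x : L | ωL x (i y) = 0} :=
      isClosed_eq hcont continuous_const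
    have hsubS : i '' (lam : Set H) ⊆ {x : L | ωL x (i y) = 0} := by
      rintro _ ⟨x, hx, rfl⟩
      exact hy x hx
    have hμS : closure (i '' (lam : Set H)) ⊆ {x : L | ωL x (i y) = 0} :=
      closure_minimal hsubS hclosed
    have hiy : i y ∈ closure (i '' (lam : Set H)) := by
      rw [hclos_lag]
      intro x hx
      exact hμS hx
    have : i y ∈ i '' (lam : Set H) := by
      rw [← hclos_inter]
      exact ⟨hiy, ⟨y, rfl⟩⟩
    obtain ⟨z, hz, hzy⟩ := this
    rwa [← hinj hzy]
end

section
/- Let H be a Banach space with bounded inner product h, and let A be a closed operator on H unitary with respect to h (h(Ax,Ay) = h(x,y) on dom A) such that A − I is a closed Fredholm operator of index 0. Then there is a neighbourhood N ⊆ ℂ of 1 such that σ(A) ∩ N ⊆ {1}, and 1 (if it is in the spectrum) is an isolated spectral point with finite and equal geometric and algebraic multiplicities. -/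
/-!
Write `T = A - 1`, `K = ker T` and `R = ran T`. Unitarity forces `K ∩ R = 0`: if `A k = k` and
`k = A d - d`, then `h(k, k) = h(A d, A k) - h(d, k) = 0`. As `dim K = codim R`, this gives
`H = K ⊕ R`, and `T` restricts to a closed bijection from `D ∩ R` onto the Banach space `R`.
The resolvent set of a closed operator is open, so `T - μ` is bijective on `R` for small `μ`;
since `T - μ` is `-μ` on `K`, it is then bijective on `H` for small `μ ≠ 0`. Read on the graph
of `A`, where it is bounded, `A - λ` has a bounded inverse by Banach's inverse mapping theorem.
Finally `K ∩ R = 0` gives `ker T² = ker T`.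
-/

/-- Iterated kernels of `A - I` for an operator `A` with domain `D`:
`iterKer D A k` is the set of generalized eigenvectors of order `≤ k`
of `A` for the eigenvalue `1`. -/
def iterKer {H : Type*} [AddCommGroup H] [Module ℂ H]
    (D : Submodule ℂ H) (A : ↥D →ₗ[ℂ] H) : ℕ → Set H
  | 0 => {0}
  | (k + 1) => {x : H | ∃ hx : x ∈ D, A ⟨x, hx⟩ - x ∈ iterKer D A k}

open Function Filter Topology

namespace LinearPMap

section Graph

variable {R E F : Type*} [Ring R] [AddCommGroup E] [Module R E] [AddCommGroup F] [Module R F]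

def toGraph (f : E →ₗ.[R] F) : f.domain →ₗ[R] f.graph :=
  (f.domain.subtype.prod f.toFun).codRestrict f.graph f.mem_graph

theorem toGraph_bijective (f : E →ₗ.[R] F) : Bijective f.toGraph := by
  refine ⟨fun x y hxy => Subtype.ext (congrArg (fun p : f.graph => (p : E × F).1) hxy), ?_⟩
  rintro ⟨p, hp⟩
  obtain ⟨x, hx₁, hx₂⟩ := f.mem_graph_iff.mp hp
  exact ⟨x, Subtype.ext (Prod.ext hx₁ hx₂)⟩

end Graph

section Restrict

variable {R E : Type*} [Ring R] [AddCommGroup E] [Module R E]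

def restrict (f : E →ₗ.[R] E) (p : Submodule R E) (hf : ∀ x, f.toFun x ∈ p) : p →ₗ.[R] p where
  domain := f.domain.comap p.subtype
  toFun := (f.toFun ∘ₗ (p.subtype ∘ₗ Submodule.subtype _).codRestrict f.domain fun x => x.2)
    |>.codRestrict p fun _ => hf _

theorem bijective_restrict_range {f : E →ₗ.[R] E}
    (h : IsCompl ((LinearMap.ker f.toFun).map f.domain.subtype) (LinearMap.range f.toFun)) :
    Bijective (f.restrict (LinearMap.range f.toFun) (LinearMap.mem_range_self f.toFun)).toFun := by
  refine ⟨(injective_iff_map_eq_zero _).mpr fun x hx => ?_, ?_⟩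
  · have hxK : ((x : LinearMap.range f.toFun) : E) ∈ (LinearMap.ker f.toFun).map f.domain.subtype :=
      ⟨⟨x, x.2⟩, congrArg Subtype.val hx, rfl⟩
    exact Subtype.ext (Subtype.ext (h.disjoint.le_bot ⟨hxK, (x : LinearMap.range f.toFun).2⟩))
  · rintro ⟨_, x, rfl⟩
    obtain ⟨_, ⟨k, hk, rfl⟩, r, hr, hkr⟩ :=
      Submodule.mem_sup.mp (h.sup_eq_top ▸ Submodule.mem_top : (x : E) ∈ _ ⊔ _)
    have hxk : ((x - k : f.domain) : E) = r := by
      rw [Submodule.coe_sub, ← hkr, Submodule.subtype_apply, add_sub_cancel_left]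
    refine ⟨⟨⟨x - k, by rwa [← hxk] at hr⟩, (x - k).2⟩, Subtype.ext ?_⟩
    show f.toFun (x - k) = f.toFun x
    rw [f.toFun.map_sub, LinearMap.mem_ker.mp hk, sub_zero]

theorem bijective_sub_smul_of_bijective_restrict_range {K E : Type*} [Field K]
    [AddCommGroup E] [Module K E] {f : E →ₗ.[K] E}
    (h : IsCompl ((LinearMap.ker f.toFun).map f.domain.subtype) (LinearMap.range f.toFun))
    {μ : K} (hμ : μ ≠ 0)
    (hbij : Bijective ((f.restrict _ (LinearMap.mem_range_self f.toFun)).toFun -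
      μ • (f.restrict _ (LinearMap.mem_range_self f.toFun)).domain.subtype)) :
    Bijective (f.toFun - μ • f.domain.subtype) := by
  refine ⟨(injective_iff_map_eq_zero _).mpr fun x hx => ?_, fun y => ?_⟩
  · have hx' : f.toFun x = μ • (x : E) := sub_eq_zero.mp hx
    have hxR : (x : E) ∈ LinearMap.range f.toFun := by
      rw [← inv_smul_smul₀ hμ (x : E), ← hx']
      exact Submodule.smul_mem _ _ (LinearMap.mem_range_self _ _)
    have := (injective_iff_map_eq_zero _).mp hbij.1 ⟨⟨x, hxR⟩, x.2⟩ (Subtype.ext hx)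
    exact Subtype.ext (congrArg (fun z => (z.1 : E)) this)
  · obtain ⟨_, ⟨k, hk, rfl⟩, r, hr, rfl⟩ :=
      Submodule.mem_sup.mp (h.sup_eq_top ▸ Submodule.mem_top : y ∈ _ ⊔ _)
    obtain ⟨z, hz⟩ := hbij.2 ⟨r, hr⟩
    refine ⟨-μ⁻¹ • k + ⟨z, z.2⟩, ?_⟩
    have hz' : f.toFun ⟨z, z.2⟩ - μ • (z : E) = r := congrArg Subtype.val hz
    simp only [LinearMap.sub_apply, LinearMap.smul_apply, Submodule.subtype_apply,
      Submodule.coe_add, Submodule.coe_smul] at hz' ⊢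
    rw [f.toFun.map_add, f.toFun.map_smul, LinearMap.mem_ker.mp hk, smul_zero, zero_add, ← hz',
      smul_add, smul_smul, mul_neg, mul_inv_cancel₀ hμ]
    module

end Restrict

section Closed

variable {R E F : Type*} [CommRing R] [AddCommGroup E] [Module R E] [AddCommGroup F] [Module R F]
  [TopologicalSpace E] [TopologicalSpace F] [IsTopologicalAddGroup F]

theorem IsClosed.vadd {f : E →ₗ.[R] F} (hf : f.IsClosed) (g : E →L[R] F) :
    ((g : E →ₗ[R] F) +ᵥ f).IsClosed := by
  have : (((g : E →ₗ[R] F) +ᵥ f).graph : Set (E × F)) =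
      (fun p : E × F => (p.1, p.2 - g p.1)) ⁻¹' f.graph := by
    ext ⟨x, y⟩
    simp only [Set.mem_preimage, SetLike.mem_coe, mem_graph_iff, vadd_apply]
    constructor
    · rintro ⟨z, rfl, rfl⟩
      exact ⟨z, rfl, by simp⟩
    · rintro ⟨z, rfl, hz⟩
      exact ⟨z, rfl, by simp [hz]⟩
  unfold LinearPMap.IsClosed
  rw [this]
  exact hf.preimage (by fun_prop)

theorem IsClosed.restrict {f : E →ₗ.[R] E} (hf : f.IsClosed) (p : Submodule R E)
    (hp : ∀ x, f.toFun x ∈ p) : (f.restrict p hp).IsClosed := by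
  have : ((f.restrict p hp).graph : Set (p × p)) =
      Prod.map Subtype.val Subtype.val ⁻¹' f.graph := by
    ext ⟨x, y⟩
    simp only [Set.mem_preimage, SetLike.mem_coe, mem_graph_iff, Prod.map]
    constructor
    · rintro ⟨z, rfl, rfl⟩
      exact ⟨⟨z, z.2⟩, rfl, rfl⟩
    · rintro ⟨⟨z, hz⟩, rfl, hzy⟩
      exact ⟨⟨x, hz⟩, rfl, Subtype.ext hzy⟩
  unfold LinearPMap.IsClosed
  rw [this]
  exact hf.preimage (by fun_prop)

end Closed

section Banach

variable {𝕜 E : Type*} [NontriviallyNormedField 𝕜] [NormedAddCommGroup E] [NormedSpace 𝕜 E]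
  (f : E →ₗ.[𝕜] E)

/-- On the graph of `f`, the operator `f - μ` becomes bounded. -/
def graphSubSMul (μ : 𝕜) : f.graph →L[𝕜] E :=
  (ContinuousLinearMap.snd 𝕜 E E - μ • ContinuousLinearMap.fst 𝕜 E E).comp f.graph.subtypeL

theorem bijective_graphSubSMul_iff {μ : 𝕜} :
    Bijective (f.graphSubSMul μ) ↔ Bijective (f.toFun - μ • f.domain.subtype) :=
  (Bijective.of_comp_iff _ f.toGraph_bijective).symm

variable [CompleteSpace E] {f}

theorem IsClosed.exists_norm_le_of_bijective_sub_smul (hf : f.IsClosed) {μ : 𝕜}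
    (h : Bijective (f.toFun - μ • f.domain.subtype)) :
    ∃ C, ∀ x : f.domain, ‖(x : E)‖ ≤ C * ‖f x - μ • (x : E)‖ := by
  have : CompleteSpace f.graph := hf.completeSpace_coe
  rw [← bijective_graphSubSMul_iff] at h
  let e := ContinuousLinearEquiv.ofBijective (f.graphSubSMul μ)
    (LinearMap.ker_eq_bot.mpr h.1) (LinearMap.range_eq_top.mpr h.2)
  refine ⟨‖(e.symm : E →L[𝕜] f.graph)‖, fun x => ?_⟩
  calc ‖(x : E)‖ ≤ ‖f.toGraph x‖ := norm_fst_le (f.toGraph x : E × E)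
    _ = ‖e.symm (f x - μ • (x : E))‖ := by rw [← e.symm_apply_apply (f.toGraph x)]; rfl
    _ ≤ _ := (e.symm : E →L[𝕜] f.graph).le_opNorm _

theorem IsClosed.eventually_bijective_sub_smul (hf : f.IsClosed) {μ₀ : 𝕜}
    (h : Bijective (f.toFun - μ₀ • f.domain.subtype)) :
    ∀ᶠ μ : 𝕜 in 𝓝 μ₀, Bijective (f.toFun - μ • f.domain.subtype) := by
  have : CompleteSpace f.graph := hf.completeSpace_coe
  rw [← bijective_graphSubSMul_iff] at h
  have hcont : Continuous f.graphSubSMul := by unfold graphSubSMul; fun_prop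
  have hmem : f.graphSubSMul μ₀ ∈ Set.range ((↑) : (f.graph ≃L[𝕜] E) → f.graph →L[𝕜] E) :=
    ⟨ContinuousLinearEquiv.ofBijective (f.graphSubSMul μ₀)
      (LinearMap.ker_eq_bot.mpr h.1) (LinearMap.range_eq_top.mpr h.2), rfl⟩
  filter_upwards [hcont.continuousAt (ContinuousLinearEquiv.isOpen.mem_nhds hmem)]
    with μ ⟨e, he⟩
  rw [← bijective_graphSubSMul_iff, ← he]
  exact e.bijective

theorem IsClosed.eventually_bijective_sub_smul_of_isCompl (hf : f.IsClosed)
    (hR : _root_.IsClosed (LinearMap.range f.toFun : Set E))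
    (h : IsCompl ((LinearMap.ker f.toFun).map f.domain.subtype) (LinearMap.range f.toFun)) :
    ∀ᶠ μ : 𝕜 in 𝓝[≠] 0, Bijective (f.toFun - μ • f.domain.subtype) := by
  have : CompleteSpace (LinearMap.range f.toFun) := hR.completeSpace_coe
  have hres := (hf.restrict _ (LinearMap.mem_range_self f.toFun)).eventually_bijective_sub_smul
    (μ₀ := 0) (by simpa using bijective_restrict_range h)
  filter_upwards [nhdsWithin_le_nhds hres, self_mem_nhdsWithin] with μ hμ hμ0
  exact bijective_sub_smul_of_bijective_restrict_range h hμ0 hμ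

end Banach

end LinearPMap

theorem Submodule.isCompl_of_disjoint_of_finrank_eq {K V : Type*} [Field K] [AddCommGroup V]
    [Module K V] {p q : Submodule K V} [FiniteDimensional K p] [FiniteDimensional K (V ⧸ q)]
    (hpq : Disjoint p q) (hrank : Module.finrank K p = Module.finrank K (V ⧸ q)) :
    IsCompl p q := by
  have hinj : Injective (q.mkQ ∘ₗ p.subtype) := by
    rw [← LinearMap.ker_eq_bot, LinearMap.ker_comp, Submodule.ker_mkQ,
      ← Submodule.disjoint_iff_comap_eq_bot]
    exact hpq
  have hsurj := (LinearMap.injective_iff_surjective_of_finrank_eq_finrank hrank).mp hinj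
  rw [← LinearMap.range_eq_top, LinearMap.range_comp, Submodule.range_subtype,
    Submodule.map_mkQ_eq_top, sup_comm] at hsurj
  exact ⟨hpq, codisjoint_iff.mpr hsurj⟩

theorem disjoint_ker_range_sub_subtype_of_unitary {R M : Type*} [Ring R] [AddCommGroup M]
    [Module R M] (h : M → M → ℂ) (hadd : ∀ x y z : M, h (x + y) z = h x z + h y z)
    (hpos : ∀ x : M, x ≠ 0 → 0 < (h x x).re) {D : Submodule R M} {A : D →ₗ[R] M}
    (hunitary : ∀ x y : D, h (A x) (A y) = h x y) :
    Disjoint ((LinearMap.ker (A - D.subtype)).map D.subtype) (LinearMap.range (A - D.subtype)) := by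
  rw [Submodule.disjoint_def]
  rintro _ ⟨k, hk, rfl⟩ ⟨d, hd⟩
  by_contra hne
  have hAk : A k = k := sub_eq_zero.mp hk
  have hsub (z : M) : ∀ x y, h (x - y) z = h x z - h y z :=
    (AddMonoidHom.mk' (h · z) (hadd · · z)).map_sub
  have hkk : h k k = 0 :=
    calc h k k = h (A d - d) (A k) := by rw [show A d - d = k from hd, hAk]
      _ = 0 := by rw [hsub, hunitary, hAk, sub_self]
  exact (hpos _ hne).ne' (by rw [Submodule.subtype_apply, hkk, Complex.zero_re])

section IterKer

variable {H : Type*} [AddCommGroup H] [Module ℂ H] {D : Submodule ℂ H} {A : D →ₗ[ℂ] H}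

theorem iterKer_one : iterKer D A 1 = (LinearMap.ker (A - D.subtype)).map D.subtype := by
  ext x
  simp [iterKer, sub_eq_zero]

theorem iterKer_succ_eq_one
    (h : Disjoint ((LinearMap.ker (A - D.subtype)).map D.subtype) (LinearMap.range (A - D.subtype)))
    (k : ℕ) : iterKer D A (k + 1) = iterKer D A 1 := by
  induction k with
  | zero => rfl
  | succ k ih =>
    ext x
    rw [iterKer, ih, iterKer_one]
    constructor
    · rintro ⟨hx, hK⟩
      exact ⟨⟨x, hx⟩, h.le_bot ⟨hK, ⟨⟨x, hx⟩, rfl⟩⟩, rfl⟩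
    · rintro ⟨y, hy, rfl⟩
      have hy0 : A y - y = 0 := hy
      exact ⟨y.2, by simp [hy0]⟩

end IterKer

theorem h_unitary_spectrum_near_one_general
    {H : Type*} [NormedAddCommGroup H] [NormedSpace ℂ H] [CompleteSpace H]
    (h : H → H → ℂ)
    (hadd : ∀ x y z : H, h (x + y) z = h x z + h y z)
    (hpos : ∀ x : H, x ≠ 0 → 0 < (h x x).re)
    (D : Submodule ℂ H) (A : ↥D →ₗ[ℂ] H)
    (hclosed : IsClosed {p : H × H | ∃ d : ↥D, p.1 = (d : H) ∧ p.2 = A d})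
    (hunitary : ∀ x y : ↥D, h (A x) (A y) = h (x : H) (y : H))
    -- `A - I` is a (closed) Fredholm operator of index 0:
    (hkerfin : FiniteDimensional ℂ ↥(LinearMap.ker (A - D.subtype)))
    (hranclosed : IsClosed ((LinearMap.range (A - D.subtype) : Submodule ℂ H) : Set H))
    (hcokerfin : FiniteDimensional ℂ (H ⧸ LinearMap.range (A - D.subtype)))
    (hindex : Module.finrank ℂ ↥(LinearMap.ker (A - D.subtype))
      = Module.finrank ℂ (H ⧸ LinearMap.range (A - D.subtype))) :
    ∃ N : Set ℂ, IsOpen N ∧ (1 : ℂ) ∈ N ∧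
      -- every point of N other than 1 is in the resolvent set of A:
      (∀ lam ∈ N, lam ≠ 1 →
        Function.Bijective (fun d : ↥D => A d - lam • (d : H)) ∧
        ∃ cr : ℝ, ∀ d : ↥D, ‖(d : H)‖ ≤ cr * ‖A d - lam • (d : H)‖) ∧
      -- geometric and algebraic multiplicities of 1 coincide (both finite):
      (∀ k : ℕ, iterKer D A (k + 1) = iterKer D A 1) := by
  let A' : H →ₗ.[ℂ] H := ⟨D, A⟩
  let T : H →ₗ.[ℂ] H := ⟨D, A - D.subtype⟩
  have hA' : A'.IsClosed := by
    have hgraph : (A'.graph : Set (H × H)) = {p | ∃ d : D, p.1 = (d : H) ∧ p.2 = A d} := by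
      ext
      simp [A', eq_comm]
    unfold LinearPMap.IsClosed
    rw [hgraph]
    exact hclosed
  have hT : T.IsClosed := by
    convert hA'.vadd (-ContinuousLinearMap.id ℂ H) using 1
    exact LinearPMap.ext' (by ext; simp [A', sub_eq_neg_add])
  have hdisj := disjoint_ker_range_sub_subtype_of_unitary h hadd hpos hunitary
  have hcompl : IsCompl ((LinearMap.ker T.toFun).map T.domain.subtype) (LinearMap.range T.toFun) :=
    Submodule.isCompl_of_disjoint_of_finrank_eq hdisj
      (by rw [Submodule.finrank_map_subtype_eq]; exact hindex)
  obtain ⟨ε, hε, hball⟩ := Metric.eventually_nhds_iff.mp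
    (eventually_nhdsWithin_iff.mp (hT.eventually_bijective_sub_smul_of_isCompl hranclosed hcompl))
  refine ⟨Metric.ball 1 ε, Metric.isOpen_ball, Metric.mem_ball_self hε, fun lam hlam hne => ?_,
    iterKer_succ_eq_one hdisj⟩
  have hbij : Bijective (A'.toFun - lam • A'.domain.subtype) := by
    convert hball (y := lam - 1) (by simpa [dist_eq_norm] using hlam) (sub_ne_zero.mpr hne) using 1
    ext
    simp [T, A', sub_smul]
  exact ⟨hbij, hA'.exists_norm_le_of_bijective_sub_smul hbij⟩

/-- If `A` is a closed operator on a Banach space, unitary with respect to a bounded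
inner product `h`, and `A - I` is a closed Fredholm operator of index `0`, then there
is a neighbourhood `N` of `1` with `σ(A) ∩ N ⊆ {1}`, and the geometric and algebraic
multiplicities of the (possible) eigenvalue `1` are finite and coincide. -/
theorem h_unitary_spectrum_near_one
    {H : Type*} [NormedAddCommGroup H] [NormedSpace ℂ H] [CompleteSpace H]
    (h : H → H → ℂ)
    (hadd : ∀ x y z : H, h (x + y) z = h x z + h y z)
    (hsmul : ∀ (c : ℂ) (x y : H), h (c • x) y = c * h x y)
    (hherm : ∀ x y : H, h x y = (starRingEnd ℂ) (h y x))
    (hpos : ∀ x : H, x ≠ 0 → 0 < (h x x).re)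
    (c : ℝ) (hbound : ∀ x y : H, ‖h x y‖ ≤ c * ‖x‖ * ‖y‖)
    (D : Submodule ℂ H) (A : ↥D →ₗ[ℂ] H)
    (hclosed : IsClosed {p : H × H | ∃ d : ↥D, p.1 = (d : H) ∧ p.2 = A d})
    (hunitary : ∀ x y : ↥D, h (A x) (A y) = h (x : H) (y : H))
    -- `A - I` is a (closed) Fredholm operator of index 0:
    (hkerfin : FiniteDimensional ℂ ↥(LinearMap.ker (A - D.subtype)))
    (hranclosed : IsClosed ((LinearMap.range (A - D.subtype) : Submodule ℂ H) : Set H))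
    (hcokerfin : FiniteDimensional ℂ (H ⧸ LinearMap.range (A - D.subtype)))
    (hindex : Module.finrank ℂ ↥(LinearMap.ker (A - D.subtype))
      = Module.finrank ℂ (H ⧸ LinearMap.range (A - D.subtype))) :
    ∃ N : Set ℂ, IsOpen N ∧ (1 : ℂ) ∈ N ∧
      -- every point of N other than 1 is in the resolvent set of A:
      (∀ lam ∈ N, lam ≠ 1 →
        Function.Bijective (fun d : ↥D => A d - lam • (d : H)) ∧
        ∃ cr : ℝ, ∀ d : ↥D, ‖(d : H)‖ ≤ cr * ‖A d - lam • (d : H)‖) ∧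
      -- geometric and algebraic multiplicities of 1 coincide (both finite):
      (∀ k : ℕ, iterKer D A (k + 1) = iterKer D A 1) :=
  h_unitary_spectrum_near_one_general h hadd hpos D A hclosed hunitary hkerfin hranclosed hcokerfin
    hindex
end

section
/- Let (H, ω) be a symplectic Banach space with direct sum decomposition H = H⁺ ⊕ H⁻ where −iω is positive definite on H⁺, negative definite on H⁻, and ω vanishes on H⁺ × H⁻. Let μ be an isotropic subspace that is the graph of a bounded invertible operator V : H⁺ → H⁻. Then μ is a Lagrangian subspace of H. -/
/-- The graph of a bounded invertible operator `V : H⁺ → H⁻`, when isotropic,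
is a Lagrangian subspace of the symplectic Banach space `H = H⁺ ⊕ H⁻`. -/
theorem graph_of_invertible_isotropic_is_lagrangian
    {H : Type*} [NormedAddCommGroup H] [NormedSpace ℂ H]
    (ω : H → H → ℂ)
    (hadd : ∀ x y z : H, ω (x + y) z = ω x z + ω y z)
    (hsmul : ∀ (c : ℂ) (x y : H), ω (c • x) y = c * ω x y)
    (hskew : ∀ x y : H, ω x y = -(starRingEnd ℂ) (ω y x))
    (C : ℝ) (hbound : ∀ x y : H, ‖ω x y‖ ≤ C * ‖x‖ * ‖y‖)
    (hnondeg : ∀ x : H, (∀ y : H, ω x y = 0) → x = 0)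
    (Hp Hm : Submodule ℂ H)
    (hsplit_sup : Hp ⊔ Hm = ⊤) (hsplit_inf : Hp ⊓ Hm = ⊥)
    (hpos : ∀ x ∈ Hp, x ≠ 0 → 0 < (-(Complex.I) * ω x x).re)
    (hneg : ∀ x ∈ Hm, x ≠ 0 → (-(Complex.I) * ω x x).re < 0)
    (horth : ∀ x ∈ Hp, ∀ y ∈ Hm, ω x y = 0)
    (V : ↥Hp →ₗ[ℂ] H) (hV : ∀ x : ↥Hp, V x ∈ Hm)
    (hVbdd : ∃ c : ℝ, ∀ x : ↥Hp, ‖V x‖ ≤ c * ‖(x : H)‖)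
    (hVsurj : ∀ y ∈ Hm, ∃ x : ↥Hp, V x = y)
    (hVinj : Function.Injective V)
    (hVinvbdd : ∃ c' : ℝ, ∀ x : ↥Hp, ‖(x : H)‖ ≤ c' * ‖V x‖)
    (hiso : ∀ a ∈ {z : H | ∃ x : ↥Hp, z = (x : H) + V x},
            ∀ b ∈ {z : H | ∃ x : ↥Hp, z = (x : H) + V x}, ω a b = 0) :
    {y : H | ∀ z ∈ {z : H | ∃ x : ↥Hp, z = (x : H) + V x}, ω z y = 0}
      = {z : H | ∃ x : ↥Hp, z = (x : H) + V x} := by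
  -- additivity in the second argument
  have hadd' : ∀ x y z : H, ω x (y + z) = ω x y + ω x z := by
    intro x y z
    rw [hskew x (y + z), hadd, map_add, neg_add, ← hskew, ← hskew]
  ext y
  constructor
  · intro hy
    -- decompose y = p + m with p ∈ Hp, m ∈ Hm
    have hymem : y ∈ Hp ⊔ Hm := hsplit_sup.symm ▸ Submodule.mem_top
    obtain ⟨p, hp, m, hm, hsum⟩ := Submodule.mem_sup.1 hymem
    obtain ⟨x0, hx0⟩ := hVsurj m hm
    -- d := p - x0 ∈ Hp
    set g : H := (x0 : H) + V x0 with hg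
    set d : H := p - (x0 : H) with hd
    have hdHp : d ∈ Hp := Submodule.sub_mem _ hp x0.2
    have hyd : y = d + g := by rw [hd, hg, hx0, ← hsum]; abel
    -- ω (Vx) d = 0 for Vx ∈ Hm, d ∈ Hp
    have hωVd : ∀ x : ↥Hp, ω (V x) d = 0 := by
      intro x
      rw [hskew, horth d hdHp (V x) (hV x), map_zero, neg_zero]
    -- take the graph element over ⟨d, hdHp⟩
    set d' : ↥Hp := ⟨d, hdHp⟩ with hd'
    have h1 : ω ((d' : H) + V d') y = 0 := hy _ ⟨d', rfl⟩
    have h2 : ω ((d' : H) + V d') g = 0 := hiso _ ⟨d', rfl⟩ _ ⟨x0, rfl⟩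
    have h3 : ω ((d' : H) + V d') d = 0 := by
      have := h1
      rw [hyd, hadd'] at this
      rw [h2, add_zero] at this
      exact this
    have h4 : ω d d = 0 := by
      have := h3
      rw [hadd, hωVd d', add_zero] at this
      exact this
    have hd0 : d = 0 := by
      by_contra h
      have := hpos d hdHp h
      rw [h4, mul_zero] at this
      simp at this
    refine ⟨x0, ?_⟩
    rw [hyd, hd0, zero_add]
  · intro hz a ha
    exact hiso a ha y hz
end

section
/- Let (H, ω) be a symplectic Banach space with splitting H = H⁺ ⊕ H⁻ as above, λ an isotropic subspace with generating operator U : dom U ⊆ H⁺ → H⁻, and μ a Lagrangian subspace whose generating operator V : H⁺ → H⁻ is bounded and invertible. Then (λ, μ) is a Fredholm pair if and only if UV⁻¹ − I_{H⁻} is a Fredholm operator, and in that case index(λ, μ) = index(UV⁻¹ − I_{H⁻}). Moreover ker(UV⁻¹ − I_{H⁻}) ≅ λ ∩ μ. -/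
/-!
The continuous linear isomorphism `H⁻ × H⁻ ≃ H`, `(a, b) ↦ V⁻¹ a + (b + a)`, carries the
horizontal subspace `H⁻ × 0` onto `μ` and the graph of `T = UV⁻¹ - I` onto `λ`. Fredholm pairs,
their indices and their intersections are invariant under such isomorphisms, and for the pair
`(graph T, H⁻ × 0)` the intersection is `ker T × 0` and the sum is `H⁻ × range T`. The splitting
is topological because `H⁺` and `H⁻` are closed, each being the `ω`-annihilator of the other.
-/

/-- Fredholm pair of closed subspaces of a normed space. -/
def FredholmPair {V : Type*} [NormedAddCommGroup V] [Module ℂ V]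
    (p q : Submodule ℂ V) : Prop :=
  FiniteDimensional ℂ ↥(p ⊓ q) ∧ IsClosed (p : Set V) ∧ IsClosed (q : Set V) ∧
    IsClosed ((p ⊔ q : Submodule ℂ V) : Set V) ∧ FiniteDimensional ℂ (V ⧸ (p ⊔ q))

/-- Index of a Fredholm pair. -/
noncomputable def indexPair {V : Type*} [NormedAddCommGroup V] [Module ℂ V]
    (p q : Submodule ℂ V) : ℤ :=
  (Module.finrank ℂ ↥(p ⊓ q) : ℤ) - (Module.finrank ℂ (V ⧸ (p ⊔ q)) : ℤ)

open LinearMap Function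

section Graph

variable {R S E F : Type*} [Ring R] [AddCommGroup S] [Module R S] [AddCommGroup E] [Module R E]
  [AddCommGroup F] [Module R F] (ι : S →ₗ[R] E) (T : S →ₗ[R] F)

theorem LinearMap.range_prod_inf_ker_snd :
    range (ι.prod T) ⊓ ker (snd R E F) = (ker T).map (ι.prod T) := by
  ext z
  constructor
  · rintro ⟨⟨s, rfl⟩, hs⟩
    exact ⟨s, by simpa using hs, rfl⟩
  · rintro ⟨s, hs, rfl⟩
    exact ⟨⟨s, rfl⟩, by simpa using hs⟩

theorem LinearMap.range_prod_sup_ker_snd :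
    range (ι.prod T) ⊔ ker (snd R E F) = (range T).comap (snd R E F) := by
  refine le_antisymm (sup_le ?_ ?_) fun z ⟨s, hs⟩ => ?_
  · rintro _ ⟨s, rfl⟩
    exact ⟨s, rfl⟩
  · intro z hz
    simp only [Submodule.mem_comap, mem_ker.1 hz, Submodule.zero_mem]
  · have hz : z = (ι s, T s) + (z.1 - ι s, 0) := by
      ext <;> simp [hs]
    rw [hz]
    exact Submodule.add_mem_sup ⟨s, rfl⟩ (by simp)

noncomputable def Submodule.quotientComapSndEquiv (p : Submodule R F) :
    ((E × F) ⧸ p.comap (LinearMap.snd R E F)) ≃ₗ[R] F ⧸ p :=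
  (quotEquivOfEq _ _ (by rw [ker_comp, ker_mkQ])).trans
    ((p.mkQ ∘ₗ LinearMap.snd R E F).quotKerEquivOfSurjective
      ((mkQ_surjective p).comp LinearMap.snd_surjective))

variable {ι} in
noncomputable def LinearMap.kerEquivRangeProdInfKerSnd (hι : Injective ι) :
    ker T ≃ₗ[R] ↥(range (ι.prod T) ⊓ ker (snd R E F)) :=
  (Submodule.equivMapOfInjective (ι.prod T) (fun _ _ h => hι (congrArg Prod.fst h)) (ker T)).trans
    (LinearEquiv.ofEq _ _ (range_prod_inf_ker_snd ι T).symm)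

end Graph

theorem Submodule.isClosed_comap_snd_iff {R E F : Type*} [Semiring R] [AddCommMonoid E] [Module R E]
    [AddCommMonoid F] [Module R F] [TopologicalSpace E] [TopologicalSpace F] (p : Submodule R F) :
    IsClosed ((p.comap (LinearMap.snd R E F) : Submodule R (E × F)) : Set (E × F)) ↔
      IsClosed (p : Set F) :=
  isQuotientMap_snd.isClosed_preimage

section Transport

variable {V W : Type*} [NormedAddCommGroup V] [Module ℂ V] [NormedAddCommGroup W] [Module ℂ W]
  (e : V ≃L[ℂ] W) (p q : Submodule ℂ V)

noncomputable def ContinuousLinearEquiv.infEquivMapInfMap :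
    ↥(p ⊓ q) ≃ₗ[ℂ] ↥(p.map (e : V →ₗ[ℂ] W) ⊓ q.map (e : V →ₗ[ℂ] W)) :=
  (e.toLinearEquiv.submoduleMap (p ⊓ q)).trans
    (LinearEquiv.ofEq _ _ (Submodule.map_inf _ e.injective))

noncomputable def ContinuousLinearEquiv.quotientEquivQuotientMap :
    (V ⧸ p) ≃ₗ[ℂ] W ⧸ p.map (e : V →ₗ[ℂ] W) :=
  Submodule.Quotient.equiv _ _ e.toLinearEquiv rfl

theorem ContinuousLinearEquiv.isClosed_map_iff :
    IsClosed ((p.map (e : V →ₗ[ℂ] W) : Submodule ℂ W) : Set W) ↔ IsClosed (p : Set V) := by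
  rw [Submodule.map_coe]
  exact e.toHomeomorph.isClosed_image

theorem fredholmPair_map_iff :
    FredholmPair (p.map (e : V →ₗ[ℂ] W)) (q.map (e : V →ₗ[ℂ] W)) ↔ FredholmPair p q := by
  rw [FredholmPair, FredholmPair, e.isClosed_map_iff, e.isClosed_map_iff, ← Submodule.map_sup,
    e.isClosed_map_iff]
  exact (Module.Finite.equiv_iff (e.infEquivMapInfMap p q)).symm.and <| Iff.rfl.and <|
    Iff.rfl.and <| Iff.rfl.and (Module.Finite.equiv_iff (e.quotientEquivQuotientMap (p ⊔ q))).symm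

theorem indexPair_map :
    indexPair (p.map (e : V →ₗ[ℂ] W)) (q.map (e : V →ₗ[ℂ] W)) = indexPair p q := by
  rw [indexPair, indexPair, ← Submodule.map_sup, ← (e.infEquivMapInfMap p q).finrank_eq,
    ← (e.quotientEquivQuotientMap (p ⊔ q)).finrank_eq]

end Transport

section GraphPair

variable {S E F : Type*} [AddCommGroup S] [Module ℂ S] [NormedAddCommGroup E] [Module ℂ E]
  [NormedAddCommGroup F] [Module ℂ F] {ι : S →ₗ[ℂ] E} (hι : Injective ι) (T : S →ₗ[ℂ] F)
include hι

theorem fredholmPair_range_prod_ker_snd_iff :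
    FredholmPair (range (ι.prod T)) (ker (snd ℂ E F)) ↔
      IsClosed (range (ι.prod T) : Set (E × F)) ∧ FiniteDimensional ℂ (ker T) ∧
        IsClosed (range T : Set F) ∧ FiniteDimensional ℂ (F ⧸ range T) := by
  have hK : IsClosed (ker (snd ℂ E F) : Set (E × F)) := isClosed_singleton.preimage continuous_snd
  have hker := Module.Finite.equiv_iff (kerEquivRangeProdInfKerSnd T hι)
  have hcoker := Module.Finite.equiv_iff ((range T).quotientComapSndEquiv (E := E))
  rw [FredholmPair, range_prod_sup_ker_snd, Submodule.isClosed_comap_snd_iff]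
  exact ⟨fun ⟨hinf, hG, _, hR, hQ⟩ => ⟨hG, hker.2 hinf, hR, hcoker.1 hQ⟩,
    fun ⟨hG, hkerT, hR, hQ⟩ => ⟨hker.1 hkerT, hG, hK, hR, hcoker.2 hQ⟩⟩

theorem indexPair_range_prod_ker_snd :
    indexPair (range (ι.prod T)) (ker (snd ℂ E F)) =
      (Module.finrank ℂ (ker T) : ℤ) - (Module.finrank ℂ (F ⧸ range T) : ℤ) := by
  rw [indexPair, range_prod_sup_ker_snd, ← (kerEquivRangeProdInfKerSnd T hι).finrank_eq,
    ((range T).quotientComapSndEquiv (E := E)).finrank_eq]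

end GraphPair

theorem Submodule.setOf_graph_eq_image {R H : Type*} [Ring R] [AddCommGroup H] [Module R H]
    {S K : Submodule R H} (hS : S ≤ K) (T : S →ₗ[R] K) :
    {p : H × H | ∃ y : S, p.1 = y ∧ p.2 = T y} =
      Prod.map (↑) (↑) '' (range ((inclusion hS).prod T) : Set (K × K)) := by
  ext ⟨a, b⟩
  constructor
  · rintro ⟨y, rfl, rfl⟩
    exact ⟨_, ⟨y, rfl⟩, rfl⟩
  · rintro ⟨_, ⟨y, rfl⟩, h⟩
    simp only [Prod.map, Prod.mk.injEq] at h
    exact ⟨y, h.1.symm, h.2.symm⟩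

theorem IsClosed.isClosed_image_prodMap_subtype_iff {X : Type*} [TopologicalSpace X] {A : Set X}
    (hA : IsClosed A) (s : Set (A × A)) :
    IsClosed (Prod.map (↑) (↑) '' s : Set (X × X)) ↔ IsClosed s :=
  (hA.isClosedEmbedding_subtypeVal.prodMap
    hA.isClosedEmbedding_subtypeVal).isClosed_iff_image_isClosed.symm

section Symplectic

variable {H : Type*} [NormedAddCommGroup H] [NormedSpace ℂ H] {ω : H → H → ℂ}

theorem isClosed_of_isCompl_of_forall_eq_zero
    (hadd_left : ∀ x y z, ω (x + y) z = ω x z + ω y z)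
    (hadd_right : ∀ x y z, ω x (y + z) = ω x y + ω x z)
    (hcont : ∀ y, Continuous fun x => ω x y) (hnondeg : ∀ x, (∀ y, ω x y = 0) → x = 0)
    {P M : Submodule ℂ H} (hPM : IsCompl P M)
    (hPM_orth : ∀ x ∈ P, ∀ y ∈ M, ω x y = 0) (hMP_orth : ∀ x ∈ M, ∀ y ∈ P, ω x y = 0) :
    IsClosed (P : Set H) := by
  suffices h : (P : Set H) = ⋂ y ∈ (M : Set H), {x | ω x y = 0} by
    rw [h]
    exact isClosed_biInter fun y _ => isClosed_eq (hcont y) continuous_const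
  have hsplit (x : H) : x ∈ P ⊔ M := hPM.sup_eq_top ▸ Submodule.mem_top
  refine subset_antisymm (fun x hx => ?_) fun x hx => ?_
  · exact Set.mem_iInter₂.2 fun y hy => hPM_orth x hx y hy
  obtain ⟨a, ha, b, hb, rfl⟩ := Submodule.mem_sup.1 (hsplit x)
  have hb0 : b = 0 := hnondeg b fun y => by
    obtain ⟨p, hp, m, hm, rfl⟩ := Submodule.mem_sup.1 (hsplit y)
    have hm' : ω (a + b) m = 0 := Set.mem_iInter₂.1 hx m hm
    rw [hadd_left, hPM_orth a ha m hm, zero_add] at hm'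
    rw [hadd_right, hMP_orth b hb p hp, hm', add_zero]
  simpa [hb0] using ha

theorem isClosed_and_isClosed_of_isCompl_of_forall_eq_zero
    (hadd : ∀ x y z, ω (x + y) z = ω x z + ω y z)
    (hskew : ∀ x y, ω x y = -(starRingEnd ℂ) (ω y x))
    {C : ℝ} (hbound : ∀ x y, ‖ω x y‖ ≤ C * ‖x‖ * ‖y‖) (hnondeg : ∀ x, (∀ y, ω x y = 0) → x = 0)
    {P M : Submodule ℂ H} (hPM : IsCompl P M) (horth : ∀ x ∈ P, ∀ y ∈ M, ω x y = 0) :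
    IsClosed (P : Set H) ∧ IsClosed (M : Set H) := by
  have hcont (y : H) : Continuous fun x => ω x y :=
    AddMonoidHomClass.continuous_of_bound (AddMonoidHom.mk' (ω · y) (hadd · · y))
      (C * ‖y‖) fun x => (hbound x y).trans_eq (by ring)
  have hadd_right (x y z : H) : ω x (y + z) = ω x y + ω x z := by
    rw [hskew, hadd, map_add, neg_add, ← hskew, ← hskew]
  have horth' : ∀ y ∈ M, ∀ x ∈ P, ω y x = 0 := fun y hy x hx => by
    rw [hskew, horth x hx y hy, map_zero, neg_zero]
  exact ⟨isClosed_of_isCompl_of_forall_eq_zero hadd hadd_right hcont hnondeg hPM horth horth',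
    isClosed_of_isCompl_of_forall_eq_zero hadd hadd_right hcont hnondeg hPM.symm horth' horth⟩

end Symplectic

section GeneratingOperator

variable {H : Type*} [NormedAddCommGroup H] [NormedSpace ℂ H] {Hp Hm : Submodule ℂ H}

noncomputable def generatorEquiv (V : Hp →ₗ[ℂ] H) (hV : ∀ x, V x ∈ Hm)
    (Vinv : Hm →ₗ[ℂ] H) (hVinv : ∀ y, Vinv y ∈ Hp)
    (hVleft : ∀ (x : Hp) (hx : V x ∈ Hm), Vinv ⟨V x, hx⟩ = x)
    (hVright : ∀ (y : Hm) (hy : Vinv y ∈ Hp), V ⟨Vinv y, hy⟩ = y)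
    {c c' : ℝ} (hc : ∀ x : Hp, ‖V x‖ ≤ c * ‖(x : H)‖) (hc' : ∀ x : Hp, ‖(x : H)‖ ≤ c' * ‖V x‖) :
    Hp ≃L[ℂ] Hm :=
  LinearEquiv.toContinuousLinearEquivOfBounds
    (.ofLinearMap (V.codRestrict Hm hV) (Vinv.codRestrict Hp hVinv)
      (LinearMap.ext fun y => Subtype.ext (hVright y (hVinv y)))
      (LinearMap.ext fun x => Subtype.ext (hVleft x (hV x))))
    c c' hc fun y => by simpa [hVright y (hVinv y)] using hc' ⟨Vinv y, hVinv y⟩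

variable (hHpm : Hp.IsTopCompl Hm) (W : Hp ≃L[ℂ] Hm)

noncomputable def graphCoordinates : (Hm × Hm) ≃L[ℂ] H :=
  (W.symm.skewProd (.refl ℂ Hm) (.id ℂ Hm)).trans (Hp.prodEquivOfIsTopCompl Hm hHpm)

theorem graphCoordinates_apply (a b : Hm) :
    graphCoordinates hHpm W (a, b) = (W.symm a : H) + (b + a : H) := by
  simp [graphCoordinates, Submodule.prodEquivOfIsTopCompl_apply]

theorem map_ker_snd_graphCoordinates {mu : Submodule ℂ H}
    (hmu : (mu : Set H) = {z | ∃ x : Hp, z = (x : H) + (W x : H)}) :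
    (ker (snd ℂ Hm Hm)).map (graphCoordinates hHpm W : (Hm × Hm) →ₗ[ℂ] H) = mu := by
  ext z
  rw [Submodule.mem_map, ← SetLike.mem_coe, hmu]
  constructor
  · rintro ⟨⟨a, b⟩, hb, rfl⟩
    obtain rfl : b = 0 := hb
    exact ⟨W.symm a, by simp [graphCoordinates_apply]⟩
  · rintro ⟨x, rfl⟩
    exact ⟨(W x, 0), rfl, by simp [graphCoordinates_apply]⟩

theorem map_range_prod_graphCoordinates {D : Submodule ℂ H} (hD : D ≤ Hp) (U : D →ₗ[ℂ] H)
    {lam : Submodule ℂ H} (hlam : (lam : Set H) = {z | ∃ d : D, z = d + U d})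
    {S : Submodule ℂ H} (hS : S ≤ Hm) (hSD : ∀ y : Hm, (y : H) ∈ S ↔ (W.symm y : H) ∈ D)
    (T : S →ₗ[ℂ] Hm)
    (hT : ∀ (y : Hm) (hd : (W.symm y : H) ∈ D) (hmem : (y : H) ∈ S),
      (T ⟨y, hmem⟩ : H) = U ⟨W.symm y, hd⟩ - y) :
    (range ((Submodule.inclusion hS).prod T)).map
      (graphCoordinates hHpm W : (Hm × Hm) →ₗ[ℂ] H) = lam := by
  ext z
  rw [Submodule.mem_map, ← SetLike.mem_coe, hlam]
  constructor
  · rintro ⟨_, ⟨s, rfl⟩, rfl⟩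
    have hd := (hSD (Submodule.inclusion hS s)).1 s.2
    have hTs : (T s : H) = U ⟨_, hd⟩ - s := hT _ hd s.2
    refine ⟨⟨_, hd⟩, ?_⟩
    simp [graphCoordinates_apply, hTs]
  · rintro ⟨d, rfl⟩
    set y := W ⟨d, hD d.2⟩
    have hd : (W.symm y : H) ∈ D := by simp [y]
    have hy : (y : H) ∈ S := (hSD y).2 hd
    have hincl : Submodule.inclusion hS ⟨y, hy⟩ = y := rfl
    refine ⟨_, ⟨⟨y, hy⟩, rfl⟩, ?_⟩
    simp [graphCoordinates_apply, hT y hd hy, hincl, y]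

end GeneratingOperator

theorem fredholm_pair_iff_generating_operator_general
    {H : Type*} [NormedAddCommGroup H] [NormedSpace ℂ H] [CompleteSpace H]
    (ω : H → H → ℂ)
    (hadd : ∀ x y z : H, ω (x + y) z = ω x z + ω y z)
    (hskew : ∀ x y : H, ω x y = -(starRingEnd ℂ) (ω y x))
    (C : ℝ) (hbound : ∀ x y : H, ‖ω x y‖ ≤ C * ‖x‖ * ‖y‖)
    (hnondeg : ∀ x : H, (∀ y : H, ω x y = 0) → x = 0)
    (Hp Hm : Submodule ℂ H)
    (hsplit_sup : Hp ⊔ Hm = ⊤) (hsplit_inf : Hp ⊓ Hm = ⊥)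
    (horth : ∀ x ∈ Hp, ∀ y ∈ Hm, ω x y = 0)
    -- the generating operator U of the isotropic subspace λ:
    (D : Submodule ℂ H) (hD : D ≤ Hp)
    (U : ↥D →ₗ[ℂ] H)
    (lam : Submodule ℂ H)
    (hlam_graph : (lam : Set H) = {z : H | ∃ d : ↥D, z = (d : H) + U d})
    -- the generating operator V of the Lagrangian subspace μ, bounded and invertible:
    (V : ↥Hp →ₗ[ℂ] H) (hV : ∀ x : ↥Hp, V x ∈ Hm)
    (hVbdd : ∃ c : ℝ, ∀ x : ↥Hp, ‖V x‖ ≤ c * ‖(x : H)‖)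
    (hVinvbdd : ∃ c' : ℝ, ∀ x : ↥Hp, ‖(x : H)‖ ≤ c' * ‖V x‖)
    (Vinv : ↥Hm →ₗ[ℂ] H) (hVinv : ∀ y : ↥Hm, Vinv y ∈ Hp)
    (hVleft : ∀ (x : ↥Hp) (hx : V x ∈ Hm), Vinv ⟨V x, hx⟩ = (x : H))
    (hVright : ∀ (y : ↥Hm) (hy : Vinv y ∈ Hp), V ⟨Vinv y, hy⟩ = (y : H))
    (mu : Submodule ℂ H)
    (hmu_graph : (mu : Set H) = {z : H | ∃ x : ↥Hp, z = (x : H) + V x})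
    -- the operator T = U V⁻¹ - I with domain V(dom U) ⊆ H⁻, valued in H⁻:
    (T : ↥((D.comap Vinv).map Hm.subtype) →ₗ[ℂ] ↥Hm)
    (hT : ∀ (y : ↥Hm) (hd : Vinv y ∈ D)
        (hmem : (y : H) ∈ (D.comap Vinv).map Hm.subtype),
        ((T ⟨(y : H), hmem⟩ : H)) = U ⟨Vinv y, hd⟩ - (y : H)) :
    (FredholmPair lam mu ↔
      (IsClosed {p : H × H | ∃ y : ↥((D.comap Vinv).map Hm.subtype),
          p.1 = (y : H) ∧ p.2 = ((T y : ↥Hm) : H)} ∧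
       FiniteDimensional ℂ ↥(LinearMap.ker T) ∧
       IsClosed ((LinearMap.range T : Submodule ℂ ↥Hm) : Set ↥Hm) ∧
       FiniteDimensional ℂ (↥Hm ⧸ LinearMap.range T))) ∧
    (FredholmPair lam mu →
      indexPair lam mu = (Module.finrank ℂ ↥(LinearMap.ker T) : ℤ)
        - (Module.finrank ℂ (↥Hm ⧸ LinearMap.range T) : ℤ)) ∧
    Nonempty (↥(LinearMap.ker T) ≃ₗ[ℂ] ↥(lam ⊓ mu)) := by
  have hcompl : IsCompl Hp Hm := .of_eq hsplit_inf hsplit_sup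
  obtain ⟨hHp, hHm⟩ :=
    isClosed_and_isClosed_of_isCompl_of_forall_eq_zero hadd hskew hbound hnondeg hcompl horth
  obtain ⟨c, hc⟩ := hVbdd
  obtain ⟨c', hc'⟩ := hVinvbdd
  set W := generatorEquiv V hV Vinv hVinv hVleft hVright hc hc'
  have hHpm := Submodule.IsCompl.isTopCompl_of_isClosed hcompl hHp hHm
  have hS : (D.comap Vinv).map Hm.subtype ≤ Hm := Submodule.map_subtype_le _ _
  have hinj := Submodule.inclusion_injective hS
  have hSD (y : Hm) : (y : H) ∈ (D.comap Vinv).map Hm.subtype ↔ (W.symm y : H) ∈ D :=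
    ⟨fun ⟨_, hy', h⟩ => Subtype.ext h ▸ hy', fun h => ⟨y, h, rfl⟩⟩
  obtain rfl := map_range_prod_graphCoordinates hHpm W hD U hlam_graph hS hSD T hT
  obtain rfl := map_ker_snd_graphCoordinates hHpm W hmu_graph
  rw [fredholmPair_map_iff, indexPair_map, fredholmPair_range_prod_ker_snd_iff hinj,
    indexPair_range_prod_ker_snd hinj, Submodule.setOf_graph_eq_image hS T]
  exact ⟨(hHm.isClosed_image_prodMap_subtype_iff _).symm.and Iff.rfl, fun _ => rfl,
    ⟨(kerEquivRangeProdInfKerSnd T hinj).trans ((graphCoordinates hHpm W).infEquivMapInfMap _ _)⟩⟩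

/-- Characterization of Fredholm pairs via generating operators: if `λ = Graph U`
is isotropic and `μ = Graph V` is Lagrangian with `V : H⁺ → H⁻` bounded and
invertible, then `(λ, μ)` is a Fredholm pair iff `T = UV⁻¹ - I` (a closed, possibly
unbounded, operator on `H⁻`) is Fredholm; in that case the indices agree, and
`ker T ≅ λ ∩ μ`. -/
theorem fredholm_pair_iff_generating_operator
    {H : Type*} [NormedAddCommGroup H] [NormedSpace ℂ H] [CompleteSpace H]
    (ω : H → H → ℂ)
    (hadd : ∀ x y z : H, ω (x + y) z = ω x z + ω y z)
    (hsmul : ∀ (c : ℂ) (x y : H), ω (c • x) y = c * ω x y)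
    (hskew : ∀ x y : H, ω x y = -(starRingEnd ℂ) (ω y x))
    (C : ℝ) (hbound : ∀ x y : H, ‖ω x y‖ ≤ C * ‖x‖ * ‖y‖)
    (hnondeg : ∀ x : H, (∀ y : H, ω x y = 0) → x = 0)
    (Hp Hm : Submodule ℂ H)
    (hsplit_sup : Hp ⊔ Hm = ⊤) (hsplit_inf : Hp ⊓ Hm = ⊥)
    (hpos : ∀ x ∈ Hp, x ≠ 0 → 0 < (-(Complex.I) * ω x x).re)
    (hneg : ∀ x ∈ Hm, x ≠ 0 → (-(Complex.I) * ω x x).re < 0)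
    (horth : ∀ x ∈ Hp, ∀ y ∈ Hm, ω x y = 0)
    -- the generating operator U of the isotropic subspace λ:
    (D : Submodule ℂ H) (hD : D ≤ Hp)
    (U : ↥D →ₗ[ℂ] H) (hU : ∀ d : ↥D, U d ∈ Hm)
    (lam : Submodule ℂ H)
    (hlam_graph : (lam : Set H) = {z : H | ∃ d : ↥D, z = (d : H) + U d})
    (hlam_iso : ∀ x ∈ lam, ∀ y ∈ lam, ω x y = 0)
    -- the generating operator V of the Lagrangian subspace μ, bounded and invertible:
    (V : ↥Hp →ₗ[ℂ] H) (hV : ∀ x : ↥Hp, V x ∈ Hm)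
    (hVbdd : ∃ c : ℝ, ∀ x : ↥Hp, ‖V x‖ ≤ c * ‖(x : H)‖)
    (hVinvbdd : ∃ c' : ℝ, ∀ x : ↥Hp, ‖(x : H)‖ ≤ c' * ‖V x‖)
    (Vinv : ↥Hm →ₗ[ℂ] H) (hVinv : ∀ y : ↥Hm, Vinv y ∈ Hp)
    (hVleft : ∀ (x : ↥Hp) (hx : V x ∈ Hm), Vinv ⟨V x, hx⟩ = (x : H))
    (hVright : ∀ (y : ↥Hm) (hy : Vinv y ∈ Hp), V ⟨Vinv y, hy⟩ = (y : H))
    (mu : Submodule ℂ H)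
    (hmu_graph : (mu : Set H) = {z : H | ∃ x : ↥Hp, z = (x : H) + V x})
    (hmu_lag : {y : H | ∀ x ∈ (mu : Set H), ω x y = 0} = (mu : Set H))
    -- the operator T = U V⁻¹ - I with domain V(dom U) ⊆ H⁻, valued in H⁻:
    (T : ↥((D.comap Vinv).map Hm.subtype) →ₗ[ℂ] ↥Hm)
    (hT : ∀ (y : ↥Hm) (hd : Vinv y ∈ D)
        (hmem : (y : H) ∈ (D.comap Vinv).map Hm.subtype),
        ((T ⟨(y : H), hmem⟩ : H)) = U ⟨Vinv y, hd⟩ - (y : H)) :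
    (FredholmPair lam mu ↔
      (IsClosed {p : H × H | ∃ y : ↥((D.comap Vinv).map Hm.subtype),
          p.1 = (y : H) ∧ p.2 = ((T y : ↥Hm) : H)} ∧
       FiniteDimensional ℂ ↥(LinearMap.ker T) ∧
       IsClosed ((LinearMap.range T : Submodule ℂ ↥Hm) : Set ↥Hm) ∧
       FiniteDimensional ℂ (↥Hm ⧸ LinearMap.range T))) ∧
    (FredholmPair lam mu →
      indexPair lam mu = (Module.finrank ℂ ↥(LinearMap.ker T) : ℤ)
        - (Module.finrank ℂ (↥Hm ⧸ LinearMap.range T) : ℤ)) ∧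
    Nonempty (↥(LinearMap.ker T) ≃ₗ[ℂ] ↥(lam ⊓ mu)) :=
  fredholm_pair_iff_generating_operator_general ω hadd hskew C hbound hnondeg Hp Hm hsplit_sup
    hsplit_inf horth D hD U lam hlam_graph V hV hVbdd hVinvbdd Vinv hVinv hVleft hVright mu
    hmu_graph T hT
end

section
/- Let X be a Hilbert space, A a closed symmetric densely defined operator in X with domain D_m, and suppose the quotient D_max/D_m (where D_max = dom A*) carries the symplectic form induced by Green's form {x+D_m, y+D_m} := ⟨A*x, y⟩ − ⟨x, A*y⟩. Let D_W be an intermediate Hilbert space D_m ↪ D_W ↪ D_max with continuous inclusions, such that on D_m the graph norm and the D_W-norm are equivalent, and D_W is dense in D_max in the graph norm. Then the quotient D_W/D_m is a weak symplectic Hilbert space with the symplectic form obtained by restricting Green's form; in particular the restricted form is bounded and non-degenerate on D_W/D_m. -/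
/-!
Boundedness is Cauchy–Schwarz together with the continuity of `D_W ↪ D_max`. For
non-degeneracy, Green's form is continuous in the graph norm, so a vector `x ∈ D_W` that is
`{·,·}`-orthogonal to the graph-dense subspace `D_W` is orthogonal to all of `D_max`. In the
Hilbert space `X × X` this says that `(x, A*x)` is orthogonal to `(Gr A)ᗮ`, because
`(Gr A)ᗮ = {(-A*v, v) | v ∈ D_max}`; hence `(x, A*x) ∈ (Gr A)ᗮᗮ = Gr A` as `A` is closed,
i.e. `x ∈ D_m`.
-/

open scoped InnerProductSpace

namespace GreenForm

variable {𝕜 X : Type*} [RCLike 𝕜] [NormedAddCommGroup X] [InnerProductSpace 𝕜 X]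
  {Dmax : Submodule 𝕜 X} (T : Dmax →ₗ[𝕜] X)

def greenForm (x y : Dmax) : 𝕜 := ⟪T x, (y : X)⟫_𝕜 - ⟪(x : X), T y⟫_𝕜

noncomputable def graphNorm (x : Dmax) : ℝ := √(‖(x : X)‖ ^ 2 + ‖T x‖ ^ 2)

lemma greenForm_sub_right (x y z : Dmax) :
    greenForm T x (y - z) = greenForm T x y - greenForm T x z := by
  simp only [greenForm, map_sub, Submodule.coe_sub, inner_sub_right]
  ring

lemma graphNorm_nonneg (x : Dmax) : 0 ≤ graphNorm T x := Real.sqrt_nonneg _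

lemma norm_le_graphNorm (x : Dmax) : ‖(x : X)‖ ≤ graphNorm T x :=
  Real.le_sqrt_of_sq_le (le_add_of_nonneg_right (sq_nonneg _))

lemma norm_apply_le_graphNorm (x : Dmax) : ‖T x‖ ≤ graphNorm T x :=
  Real.le_sqrt_of_sq_le (le_add_of_nonneg_left (sq_nonneg _))

lemma norm_greenForm_le (x y : Dmax) :
    ‖greenForm T x y‖ ≤ 2 * graphNorm T x * graphNorm T y := by
  have hx := graphNorm_nonneg T x
  calc ‖greenForm T x y‖ ≤ ‖⟪T x, (y : X)⟫_𝕜‖ + ‖⟪(x : X), T y⟫_𝕜‖ := norm_sub_le _ _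
    _ ≤ ‖T x‖ * ‖(y : X)‖ + ‖(x : X)‖ * ‖T y‖ :=
      add_le_add (norm_inner_le_norm _ _) (norm_inner_le_norm _ _)
    _ ≤ graphNorm T x * graphNorm T y + graphNorm T x * graphNorm T y := by
      gcongr
      exacts [norm_apply_le_graphNorm T x, norm_le_graphNorm T y, norm_le_graphNorm T x,
        norm_apply_le_graphNorm T y]
    _ = 2 * graphNorm T x * graphNorm T y := by ring

lemma greenForm_eq_zero_of_dense {S : Set X}
    (hS : ∀ (y : Dmax) (ε : ℝ), 0 < ε → ∃ z : Dmax, (z : X) ∈ S ∧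
      ‖(y : X) - (z : X)‖ ^ 2 + ‖T y - T z‖ ^ 2 < ε)
    {x : Dmax} (hx : ∀ z : Dmax, (z : X) ∈ S → greenForm T x z = 0) (y : Dmax) :
    greenForm T x y = 0 := by
  refine norm_le_zero_iff.mp (le_of_forall_pos_le_add fun ε hε => ?_)
  have hM : 0 < 2 * graphNorm T x + 1 := by linarith [graphNorm_nonneg T x]
  set δ := ε / (2 * graphNorm T x + 1)
  have hδ : 0 < δ := by positivity
  obtain ⟨z, hzS, hz⟩ := hS y (δ ^ 2) (by positivity)
  have hyz : graphNorm T (y - z) < δ := by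
    rw [graphNorm, map_sub, Submodule.coe_sub]
    exact (Real.sqrt_lt' hδ).2 hz
  calc ‖greenForm T x y‖ = ‖greenForm T x (y - z)‖ := by
        rw [greenForm_sub_right, hx z hzS, sub_zero]
    _ ≤ 2 * graphNorm T x * graphNorm T (y - z) := norm_greenForm_le T x (y - z)
    _ ≤ 2 * graphNorm T x * δ := by gcongr; linarith [graphNorm_nonneg T x]
    _ ≤ 0 + ε := by
      rw [zero_add, mul_div_assoc', div_le_iff₀ hM]
      nlinarith

variable (Dm : Submodule 𝕜 X)

/-- The graph of `A = T|_{D_m}`, placed in `WithLp 2 (X × X)` so that orthogonal complements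
are taken for the Hilbert structure of the graph inner product. -/
def minGraph : Submodule 𝕜 (WithLp 2 (X × X)) where
  carrier := {p | ∃ x : Dmax, (x : X) ∈ Dm ∧ p.fst = x ∧ p.snd = T x}
  add_mem' := by
    rintro p q ⟨u, hu, hp, hp'⟩ ⟨v, hv, hq, hq'⟩
    exact ⟨u + v, Dm.add_mem hu hv, by simp [hp, hq], by simp [hp', hq']⟩
  zero_mem' := ⟨0, Dm.zero_mem, by simp, by simp⟩
  smul_mem' := by
    rintro a p ⟨u, hu, hp, hp'⟩
    exact ⟨a • u, Dm.smul_mem a hu, by simp [hp], by simp [hp']⟩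

lemma isClosed_minGraph
    (hclosed : IsClosed {p : X × X | ∃ x : Dmax, (x : X) ∈ Dm ∧ p.1 = x ∧ p.2 = T x}) :
    IsClosed (minGraph T Dm : Set (WithLp 2 (X × X))) :=
  hclosed.preimage (WithLp.prodContinuousLinearEquiv 2 𝕜 X X).continuous

section Adjoint

variable {T Dm} (hDmmax : Dm ≤ Dmax) (hdense : Dense (Dm : Set X))
  (hadj_dom : ∀ y : X, (∃ z : X, ∀ x : Dmax, (x : X) ∈ Dm → ⟪T x, y⟫_𝕜 = ⟪(x : X), z⟫_𝕜) →
    y ∈ Dmax)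
  (hadj_eq : ∀ x y : Dmax, (x : X) ∈ Dm → ⟪T x, (y : X)⟫_𝕜 = ⟪(x : X), T y⟫_𝕜)
include hDmmax hdense hadj_dom hadj_eq

lemma exists_eq_of_mem_orthogonal_minGraph {w : WithLp 2 (X × X)} (hw : w ∈ (minGraph T Dm)ᗮ) :
    ∃ v : Dmax, (v : X) = w.snd ∧ T v = -w.fst := by
  have hw' : ∀ u : Dmax, (u : X) ∈ Dm → ⟪(u : X), w.fst⟫_𝕜 + ⟪T u, w.snd⟫_𝕜 = 0 := by
    intro u hu
    simpa [WithLp.prod_inner_apply] using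
      (Submodule.mem_orthogonal _ w).1 hw (WithLp.toLp 2 ((u : X), T u)) ⟨u, hu, rfl, rfl⟩
  have hv : w.snd ∈ Dmax := hadj_dom w.snd
    ⟨-w.fst, fun u hu => by rw [inner_neg_right]; linear_combination hw' u hu⟩
  refine ⟨⟨w.snd, hv⟩, rfl, hdense.eq_of_inner_right 𝕜 fun u hu => ?_⟩
  rw [inner_neg_right]
  linear_combination hw' ⟨u, hDmmax hu⟩ hu - hadj_eq ⟨u, hDmmax hu⟩ ⟨w.snd, hv⟩ hu

lemma toLp_mem_orthogonal_orthogonal_minGraph {x : Dmax} (hx : ∀ y : Dmax, greenForm T x y = 0) :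
    WithLp.toLp 2 ((x : X), T x) ∈ (minGraph T Dm)ᗮᗮ := by
  refine (Submodule.mem_orthogonal _ _).2 fun w hw => ?_
  obtain ⟨v, hv, hTv⟩ := exists_eq_of_mem_orthogonal_minGraph hDmmax hdense hadj_dom hadj_eq hw
  have hconj := congrArg (starRingEnd 𝕜) (hx v)
  simp only [greenForm, map_sub, inner_conj_symm, map_zero, hv, hTv, inner_neg_left] at hconj
  rw [WithLp.prod_inner_apply]
  change ⟪w.fst, (x : X)⟫_𝕜 + ⟪w.snd, T x⟫_𝕜 = 0
  linear_combination hconj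

theorem mem_of_greenForm_eq_zero [CompleteSpace X]
    (hclosed : IsClosed {p : X × X | ∃ x : Dmax, (x : X) ∈ Dm ∧ p.1 = x ∧ p.2 = T x})
    {x : Dmax} (hx : ∀ y : Dmax, greenForm T x y = 0) : (x : X) ∈ Dm := by
  have hmem := toLp_mem_orthogonal_orthogonal_minGraph hDmmax hdense hadj_dom hadj_eq hx
  rw [Submodule.orthogonal_orthogonal_eq_closure,
    (isClosed_minGraph T Dm hclosed).submodule_topologicalClosure_eq] at hmem
  obtain ⟨u, hu, hxu, -⟩ := hmem
  exact (Subtype.ext hxu : x = u) ▸ hu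

end Adjoint

end GreenForm

open GreenForm in
theorem reduced_boundary_space_weak_symplectic_general
    {X : Type*} [NormedAddCommGroup X] [InnerProductSpace ℂ X] [CompleteSpace X]
    (Dm Dmax : Submodule ℂ X) (hDmmax : Dm ≤ Dmax)
    (hdense : Dense (Dm : Set X))
    (Astar : ↥Dmax →ₗ[ℂ] X)
    -- A := Astar|_{Dm} is closed:
    (hclosed : IsClosed {p : X × X | ∃ x : ↥Dmax, (x : X) ∈ Dm ∧ p.1 = ↑x ∧ p.2 = Astar x})
    -- Dmax is the adjoint domain of A, and Astar acts as the adjoint (in particular A is symmetric):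
    (hadj_dom : ∀ y : X,
      (∃ z : X, ∀ x : ↥Dmax, (x : X) ∈ Dm →
        (inner ℂ (Astar x) y : ℂ) = (inner ℂ ((x : X)) z : ℂ)) ↔ y ∈ Dmax)
    (hadj_eq : ∀ x y : ↥Dmax, (x : X) ∈ Dm →
      (inner ℂ (Astar x) ((y : X)) : ℂ) = (inner ℂ ((x : X)) (Astar y) : ℂ))
    -- the intermediate space D_W with its Hilbert norm NW:
    (DW : Submodule ℂ X)
    (NW : X → ℝ)
    -- continuous inclusion D_W ↪ D_max (graph norm):
    (hincl : ∃ c : ℝ, ∀ x : ↥Dmax, (x : X) ∈ DW →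
      Real.sqrt (‖(x : X)‖ ^ 2 + ‖Astar x‖ ^ 2) ≤ c * NW (x : X))
    -- density of D_W in D_max in the graph norm:
    (hWdense : ∀ (x : ↥Dmax) (ε : ℝ), 0 < ε → ∃ y : ↥Dmax, (y : X) ∈ DW ∧
      ‖(x : X) - (y : X)‖ ^ 2 + ‖Astar x - Astar y‖ ^ 2 < ε) :
    -- Green's form is bounded on D_W with respect to NW:
    (∃ C : ℝ, ∀ x y : ↥Dmax, (x : X) ∈ DW → (y : X) ∈ DW →
      ‖(inner ℂ (Astar x) ((y : X)) : ℂ) - (inner ℂ ((x : X)) (Astar y) : ℂ)‖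
        ≤ C * NW (x : X) * NW (y : X)) ∧
    -- Green's form is non-degenerate on D_W/D_m:
    (∀ x : ↥Dmax, (x : X) ∈ DW →
      (∀ y : ↥Dmax, (y : X) ∈ DW →
        (inner ℂ (Astar x) ((y : X)) : ℂ) - (inner ℂ ((x : X)) (Astar y) : ℂ) = 0) →
      (x : X) ∈ Dm) := by
  obtain ⟨c, hc⟩ := hincl
  refine ⟨⟨2 * c * c, fun x y hx hy => ?_⟩, fun x _ hx => ?_⟩
  · have hcx : 0 ≤ c * NW x := (graphNorm_nonneg Astar x).trans (hc x hx)
    calc ‖greenForm Astar x y‖ ≤ 2 * graphNorm Astar x * graphNorm Astar y :=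
          norm_greenForm_le Astar x y
      _ ≤ 2 * (c * NW x) * (c * NW y) := by
          gcongr
          exacts [graphNorm_nonneg Astar y, hc x hx, hc y hy]
      _ = 2 * c * c * NW x * NW y := by ring
  · exact mem_of_greenForm_eq_zero hDmmax hdense (fun y => (hadj_dom y).1) hadj_eq hclosed
      (greenForm_eq_zero_of_dense Astar hWdense hx)

/-- Let `A` be a closed symmetric densely defined operator in a Hilbert space `X`,
with minimal domain `D_m`, adjoint `A*` with maximal domain `D_max`, and let
`D_W` be an intermediate Hilbert space (with norm `NW`) such that the inclusion
`D_W ↪ D_max` is continuous, the graph norm and `NW` are equivalent on `D_m`, and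
`D_W` is dense in `D_max` in the graph norm. Then `D_W/D_m` is a weak symplectic
Hilbert space with the restriction of Green's form
`{x,y} = ⟨A*x,y⟩ − ⟨x,A*y⟩`: the form is bounded with respect to `NW` and
non-degenerate modulo `D_m`. -/
theorem reduced_boundary_space_weak_symplectic
    {X : Type*} [NormedAddCommGroup X] [InnerProductSpace ℂ X] [CompleteSpace X]
    (Dm Dmax : Submodule ℂ X) (hDmmax : Dm ≤ Dmax)
    (hdense : Dense (Dm : Set X))
    (Astar : ↥Dmax →ₗ[ℂ] X)
    -- A := Astar|_{Dm} is closed: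
    (hclosed : IsClosed {p : X × X | ∃ x : ↥Dmax, (x : X) ∈ Dm ∧ p.1 = ↑x ∧ p.2 = Astar x})
    -- Dmax is the adjoint domain of A, and Astar acts as the adjoint (in particular A is symmetric):
    (hadj_dom : ∀ y : X,
      (∃ z : X, ∀ x : ↥Dmax, (x : X) ∈ Dm →
        (inner ℂ (Astar x) y : ℂ) = (inner ℂ ((x : X)) z : ℂ)) ↔ y ∈ Dmax)
    (hadj_eq : ∀ x y : ↥Dmax, (x : X) ∈ Dm →
      (inner ℂ (Astar x) ((y : X)) : ℂ) = (inner ℂ ((x : X)) (Astar y) : ℂ))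
    -- the intermediate space D_W with its Hilbert norm NW:
    (DW : Submodule ℂ X) (hDmW : Dm ≤ DW) (hWmax : DW ≤ Dmax)
    (NW : X → ℝ) (hNW_nonneg : ∀ x : X, 0 ≤ NW x)
    -- continuous inclusion D_W ↪ D_max (graph norm):
    (hincl : ∃ c : ℝ, ∀ x : ↥Dmax, (x : X) ∈ DW →
      Real.sqrt (‖(x : X)‖ ^ 2 + ‖Astar x‖ ^ 2) ≤ c * NW (x : X))
    -- equivalence of the graph norm and NW on D_m:
    (hequiv : ∃ c' : ℝ, ∀ x : ↥Dmax, (x : X) ∈ Dm →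
      NW (x : X) ≤ c' * Real.sqrt (‖(x : X)‖ ^ 2 + ‖Astar x‖ ^ 2))
    -- density of D_W in D_max in the graph norm:
    (hWdense : ∀ (x : ↥Dmax) (ε : ℝ), 0 < ε → ∃ y : ↥Dmax, (y : X) ∈ DW ∧
      ‖(x : X) - (y : X)‖ ^ 2 + ‖Astar x - Astar y‖ ^ 2 < ε) :
    -- Green's form is bounded on D_W with respect to NW:
    (∃ C : ℝ, ∀ x y : ↥Dmax, (x : X) ∈ DW → (y : X) ∈ DW →
      ‖(inner ℂ (Astar x) ((y : X)) : ℂ) - (inner ℂ ((x : X)) (Astar y) : ℂ)‖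
        ≤ C * NW (x : X) * NW (y : X)) ∧
    -- Green's form is non-degenerate on D_W/D_m:
    (∀ x : ↥Dmax, (x : X) ∈ DW →
      (∀ y : ↥Dmax, (y : X) ∈ DW →
        (inner ℂ (Astar x) ((y : X)) : ℂ) - (inner ℂ ((x : X)) (Astar y) : ℂ) = 0) →
      (x : X) ∈ Dm) :=
  reduced_boundary_space_weak_symplectic_general Dm Dmax hDmmax hdense Astar hclosed hadj_dom
    hadj_eq DW NW hincl hWdense
end

section
/- Let X be a Hilbert space, A a closed symmetric densely defined operator with domain D_m, and D_m ⊆ D ⊆ D_W ⊆ D_max satisfying: the graph norm and D_W-norm are equivalent on D_m, D_W is dense in D_max in the graph norm, and A_D := A*|_D is a self-adjoint Fredholm extension of A. Then the ranges satisfy ran(A*|_{D_W}) = ran(A*). -/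
/-!
The range of `A*|_D` is closed and of finite codimension, so every subspace containing it is
closed; in particular so is the range of `A*|_{D_W}`. Density of `D_W` in `D_max` for the graph
norm makes that range dense in the range of `A*`, hence equal to it.
-/

theorem Submodule.finiteDimensional_quotient_of_sup_eq_top {K V : Type*} [DivisionRing K]
    [AddCommGroup V] [Module K V] {p q : Submodule K V} [FiniteDimensional K q]
    (h : p ⊔ q = ⊤) : FiniteDimensional K (V ⧸ p) :=
  Module.Finite.of_surjective (p.mkQ ∘ₗ q.subtype) <| LinearMap.range_eq_top.mp <| by
    rwa [LinearMap.range_comp, Submodule.range_subtype, Submodule.map_mkQ_eq_top]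

theorem Submodule.map_eq_range_of_isClosed {R M F : Type*} [Semiring R] [AddCommMonoid M]
    [Module R M] [AddCommMonoid F] [Module R F] [TopologicalSpace F] {T : M →ₗ[R] F}
    {W : Submodule R M} (hclosed : IsClosed (W.map T : Set F))
    (hdense : ∀ x, T x ∈ closure (W.map T : Set F)) : W.map T = LinearMap.range T :=
  le_antisymm LinearMap.map_le_range fun _ ⟨x, hx⟩ => hx ▸ hclosed.closure_subset (hdense x)

theorem mem_closure_image_of_graph_approx {M E F : Type*} [SeminormedAddCommGroup E]
    [SeminormedAddCommGroup F] (ι : M → E) (T : M → F) {W : Set M} {x : M}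
    (h : ∀ ε : ℝ, 0 < ε → ∃ y ∈ W, ‖ι x - ι y‖ ^ 2 + ‖T x - T y‖ ^ 2 < ε) :
    T x ∈ closure (T '' W) := by
  refine Metric.mem_closure_iff.mpr fun ε hε => ?_
  obtain ⟨y, hyW, hy⟩ := h (ε ^ 2) (by positivity)
  refine ⟨T y, Set.mem_image_of_mem T hyW, ?_⟩
  rw [dist_eq_norm]
  exact lt_of_pow_lt_pow_left₀ 2 hε.le (by nlinarith [sq_nonneg ‖ι x - ι y‖])

theorem range_of_intermediate_extension_general
    {X : Type*} [NormedAddCommGroup X] [InnerProductSpace ℂ X]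
    (Dmax : Submodule ℂ X)
    (Astar : ↥Dmax →ₗ[ℂ] X)
    (DW : Submodule ℂ X)
    (hWdense : ∀ (x : ↥Dmax) (ε : ℝ), 0 < ε → ∃ y : ↥Dmax, (y : X) ∈ DW ∧
      ‖(x : X) - (y : X)‖ ^ 2 + ‖Astar x - Astar y‖ ^ 2 < ε)
    -- the intermediate domain D with D_m ⊆ D ⊆ D_W:
    (D : Submodule ℂ X) (hDW : D ≤ DW)
    -- A_D is Fredholm: finite-dimensional kernel, closed range of finite codimension:
    (hD_ranclosed : IsClosed {z : X | ∃ x : ↥Dmax, (x : X) ∈ D ∧ Astar x = z})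
    (hD_codim : ∃ (m : ℕ) (g : Fin m → X), ∀ z : X,
      ∃ w ∈ Submodule.span ℂ (Set.range g),
        z - w ∈ {z' : X | ∃ x : ↥Dmax, (x : X) ∈ D ∧ Astar x = z'}) :
    {z : X | ∃ x : ↥Dmax, (x : X) ∈ DW ∧ Astar x = z}
      = {z : X | ∃ x : ↥Dmax, Astar x = z} := by
  set R := (D.comap Dmax.subtype).map Astar
  set S := (DW.comap Dmax.subtype).map Astar
  have coe_R : (R : Set X) = {z | ∃ x : ↥Dmax, (x : X) ∈ D ∧ Astar x = z} := by ext; simp [R]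
  have coe_S : (S : Set X) = {z | ∃ x : ↥Dmax, (x : X) ∈ DW ∧ Astar x = z} := by ext; simp [S]
  obtain ⟨m, g, hg⟩ := hD_codim
  have R_sup_span : R ⊔ Submodule.span ℂ (Set.range g) = ⊤ := by
    refine eq_top_iff.mpr fun z _ => Submodule.mem_sup.mpr ?_
    obtain ⟨w, hw, hzw⟩ := hg z
    exact ⟨z - w, by rwa [← SetLike.mem_coe, coe_R], w, hw, sub_add_cancel z w⟩
  have : FiniteDimensional ℂ (Submodule.span ℂ (Set.range g)) :=
    FiniteDimensional.span_of_finite ℂ (Set.finite_range g)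
  have : FiniteDimensional ℂ (X ⧸ R) :=
    Submodule.finiteDimensional_quotient_of_sup_eq_top R_sup_span
  have S_closed : IsClosed (S : Set X) :=
    Submodule.isClosed_mono_of_finiteDimensional_quotient (coe_R ▸ hD_ranclosed)
      (Submodule.map_mono (Submodule.comap_mono hDW))
  have S_dense (x : ↥Dmax) : Astar x ∈ closure (S : Set X) := by
    rw [Submodule.map_coe]
    exact mem_closure_image_of_graph_approx Subtype.val Astar (hWdense x)
  have S_eq_range : S = LinearMap.range Astar :=
    Submodule.map_eq_range_of_isClosed S_closed S_dense
  rw [← coe_S, S_eq_range, LinearMap.coe_range]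
  rfl

/-- Let `A` be a closed symmetric densely defined operator in a Hilbert space `X`
with minimal domain `D_m`, adjoint `A*` with domain `D_max`, and intermediate
domains `D_m ⊆ D ⊆ D_W ⊆ D_max` satisfying the standard assumptions (graph norm
equivalent to the `D_W`-norm on `D_m`, `D_W` dense in `D_max` in the graph norm,
and `A_D := A*|_D` a self-adjoint Fredholm extension of `A`). Then
`ran(A*|_{D_W}) = ran(A*)`. -/
theorem range_of_intermediate_extension
    {X : Type*} [NormedAddCommGroup X] [InnerProductSpace ℂ X] [CompleteSpace X]
    (Dm Dmax : Submodule ℂ X) (hDmmax : Dm ≤ Dmax)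
    (hdense : Dense (Dm : Set X))
    (Astar : ↥Dmax →ₗ[ℂ] X)
    (hclosed : IsClosed {p : X × X | ∃ x : ↥Dmax, (x : X) ∈ Dm ∧ p.1 = ↑x ∧ p.2 = Astar x})
    (hadj_dom : ∀ y : X,
      (∃ z : X, ∀ x : ↥Dmax, (x : X) ∈ Dm →
        (inner ℂ (Astar x) y : ℂ) = (inner ℂ ((x : X)) z : ℂ)) ↔ y ∈ Dmax)
    (hadj_eq : ∀ x y : ↥Dmax, (x : X) ∈ Dm →
      (inner ℂ (Astar x) ((y : X)) : ℂ) = (inner ℂ ((x : X)) (Astar y) : ℂ))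
    (DW : Submodule ℂ X) (hDmW : Dm ≤ DW) (hWmax : DW ≤ Dmax)
    (NW : X → ℝ) (hNW_nonneg : ∀ x : X, 0 ≤ NW x)
    (hincl : ∃ c : ℝ, ∀ x : ↥Dmax, (x : X) ∈ DW →
      Real.sqrt (‖(x : X)‖ ^ 2 + ‖Astar x‖ ^ 2) ≤ c * NW (x : X))
    (hequiv : ∃ c' : ℝ, ∀ x : ↥Dmax, (x : X) ∈ Dm →
      NW (x : X) ≤ c' * Real.sqrt (‖(x : X)‖ ^ 2 + ‖Astar x‖ ^ 2))
    (hWdense : ∀ (x : ↥Dmax) (ε : ℝ), 0 < ε → ∃ y : ↥Dmax, (y : X) ∈ DW ∧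
      ‖(x : X) - (y : X)‖ ^ 2 + ‖Astar x - Astar y‖ ^ 2 < ε)
    -- the intermediate domain D with D_m ⊆ D ⊆ D_W:
    (D : Submodule ℂ X) (hDmD : Dm ≤ D) (hDW : D ≤ DW)
    -- A_D := A*|_D is symmetric and self-adjoint:
    (hD_symm : ∀ x y : ↥Dmax, (x : X) ∈ D → (y : X) ∈ D →
      (inner ℂ (Astar x) ((y : X)) : ℂ) = (inner ℂ ((x : X)) (Astar y) : ℂ))
    (hD_sa : ∀ y : X,
      (∃ z : X, ∀ x : ↥Dmax, (x : X) ∈ D →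
        (inner ℂ (Astar x) y : ℂ) = (inner ℂ ((x : X)) z : ℂ)) → y ∈ D)
    -- A_D is Fredholm: finite-dimensional kernel, closed range of finite codimension:
    (hD_kerfin : ∃ (n : ℕ) (f : Fin n → X), ∀ x : ↥Dmax, (x : X) ∈ D → Astar x = 0 →
      (x : X) ∈ Submodule.span ℂ (Set.range f))
    (hD_ranclosed : IsClosed {z : X | ∃ x : ↥Dmax, (x : X) ∈ D ∧ Astar x = z})
    (hD_codim : ∃ (m : ℕ) (g : Fin m → X), ∀ z : X,
      ∃ w ∈ Submodule.span ℂ (Set.range g),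
        z - w ∈ {z' : X | ∃ x : ↥Dmax, (x : X) ∈ D ∧ Astar x = z'}) :
    {z : X | ∃ x : ↥Dmax, (x : X) ∈ DW ∧ Astar x = z}
      = {z : X | ∃ x : ↥Dmax, Astar x = z} :=
  range_of_intermediate_extension_general Dmax Astar DW hWdense D hDW hD_ranclosed hD_codim
end
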